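/- arXiv:2405.01990 — 8 statements merged into one kernel-verified Lean document; each statement's English description precedes it below -/
import Mathlib

section
/- Let (X, Y, S) be jointly distributed with Y ∈ {0,1}, S ∈ [0,1], π = P(Y=1) ∈ (0,1), S_P = E[S | Y=1], S_N = E[S | Y=0], and suppose S is conditionally independent of X given Y. Then for any measurable classifier Ŷ = Ŷ(X) ∈ {0,1}, E[S·Ŷ] = π·S_P·TPR + (1−π)·S_N·FPR, where TPR = P(Ŷ=1 | Y=1) and FPR = P(Ŷ=1 | Y=0). -/
/-!
The events `{Y = 1}` and `{Y = 0}` are atoms of `σ(Y)`. A `σ(Y)`-measurable function is constant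
on an atom, so on an atom `D` of positive mass the conditional expectation given `σ(Y)` equals the
expectation under the elementary conditional measure `μ[|D]`. Conditional independence of `S` and
`X` given `Y` therefore becomes plain independence of `S` and `Ŷ(X)` under `μ[|{Y = y}]`, whence
`E[S Ŷ ; Y = y] = P(Y = y) · E[S | Y = y] · P(Ŷ = 1 | Y = y)`; sum over `y ∈ {0, 1}`.
-/

open MeasureTheory ProbabilityTheory Set

namespace MeasureTheory

variable {Ω : Type*} {m mΩ : MeasurableSpace Ω} {D : Set Ω}

def IsMeasurableAtom (m : MeasurableSpace Ω) (D : Set Ω) : Prop :=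
  MeasurableSet[m] D ∧ ∀ t, MeasurableSet[m] t → D ⊆ t ∨ Disjoint D t

lemma isMeasurableAtom_comap_preimage_singleton {β : Type*} [mβ : MeasurableSpace β]
    [MeasurableSingletonClass β] (Y : Ω → β) (y : β) :
    IsMeasurableAtom (mβ.comap Y) (Y ⁻¹' {y}) := by
  refine ⟨⟨{y}, measurableSet_singleton y, rfl⟩, ?_⟩
  rintro _ ⟨t, -, rfl⟩
  by_cases hy : y ∈ t
  · exact Or.inl (preimage_mono (singleton_subset_iff.mpr hy))
  · exact Or.inr ((disjoint_singleton_left.mpr hy).preimage Y)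

namespace IsMeasurableAtom

variable {E : Type*} [TopologicalSpace E] [TopologicalSpace.MetrizableSpace E] {x : Ω}

lemma eq_of_stronglyMeasurable (hD : IsMeasurableAtom m D) {g : Ω → E}
    (hg : StronglyMeasurable[m] g) (hx : x ∈ D) {y : Ω} (hy : y ∈ D) : g y = g x :=
  (hD.2 _ (hg.measurableSet_eq_fun stronglyMeasurable_const)).resolve_right
    (not_disjoint_iff.mpr ⟨x, hx, rfl⟩) hy

lemma eq_of_ae_eq (hD : IsMeasurableAtom m D) {μ : Measure[mΩ] Ω} (hμD : μ D ≠ 0)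
    {g h : Ω → E} (hg : StronglyMeasurable[m] g) (hh : StronglyMeasurable[m] h)
    (hgh : g =ᵐ[μ] h) (hx : x ∈ D) : g x = h x :=
  (hD.2 _ (hg.measurableSet_eq_fun hh)).resolve_right
    (fun hdisj ↦ hμD (measure_mono_null hdisj.subset_compl_right (ae_iff.mp hgh))) hx

end IsMeasurableAtom

end MeasureTheory

namespace ProbabilityTheory

variable {Ω : Type*} {m mΩ : MeasurableSpace Ω} {D : Set Ω}

-- When `μ D = 0` both sides vanish, the right one because `x / 0 = 0`.
lemma integral_cond_eq_setIntegral_div (μ : Measure Ω) [IsFiniteMeasure μ] (D : Set Ω)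
    (f : Ω → ℝ) : ∫ ω, f ω ∂μ[|D] = (∫ ω in D, f ω ∂μ) / μ.real D := by
  rw [cond, integral_smul_measure, ENNReal.toReal_inv, ← measureReal_def, smul_eq_mul,
    div_eq_inv_mul]

lemma MeasureTheory.IsMeasurableAtom.integral_cond_eq_condExp (hD : IsMeasurableAtom m D)
    (hm : m ≤ mΩ) {μ : Measure[mΩ] Ω} [IsFiniteMeasure μ] (hμD : μ D ≠ 0) {f : Ω → ℝ}
    (hf : Integrable f μ) {x : Ω} (hx : x ∈ D) : ∫ ω, f ω ∂μ[|D] = μ[f|m] x := by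
  have hconst : ∀ y ∈ D, μ[f|m] y = μ[f|m] x :=
    fun y hy ↦ hD.eq_of_stronglyMeasurable stronglyMeasurable_condExp hx hy
  rw [integral_cond_eq_setIntegral_div, ← setIntegral_condExp hm hf hD.1,
    setIntegral_congr_fun (hm _ hD.1) hconst, setIntegral_const, smul_eq_mul,
    mul_div_cancel_left₀ _ ((measureReal_ne_zero_iff (measure_ne_top μ D)).mpr hμD)]

variable [StandardBorelSpace Ω] {hm : m ≤ mΩ} {μ : Measure[mΩ] Ω} [IsFiniteMeasure μ]

theorem CondIndepFun.indepFun_cond_of_isMeasurableAtom {β γ : Type*} [MeasurableSpace β]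
    [MeasurableSpace γ] {f : Ω → β} {g : Ω → γ} (hfg : CondIndepFun m hm f g μ)
    (hf : Measurable f) (hg : Measurable g) (hD : IsMeasurableAtom m D) (hμD : μ D ≠ 0) :
    IndepFun f g μ[|D] := by
  obtain ⟨x, hx⟩ := nonempty_of_measure_ne_zero hμD
  have hcond : ∀ E, MeasurableSet E → μ[|D].real E = (μ⟦E|m⟧) x := fun E hE ↦ by
    rw [← integral_indicator_one hE]
    exact hD.integral_cond_eq_condExp hm hμD ((integrable_const 1).indicator hE) hx
  refine indepFun_iff_measure_inter_preimage_eq_mul.mpr fun s t hs ht ↦ ?_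
  rw [← ENNReal.toReal_eq_toReal_iff' (measure_ne_top _ _)
    (ENNReal.mul_ne_top (measure_ne_top _ _) (measure_ne_top _ _)), ENNReal.toReal_mul]
  change μ[|D].real _ = μ[|D].real _ * μ[|D].real _
  rw [hcond _ ((hf hs).inter (hg ht)), hcond _ (hf hs), hcond _ (hg ht)]
  exact hD.eq_of_ae_eq hμD stronglyMeasurable_condExp
    (stronglyMeasurable_condExp.mul stronglyMeasurable_condExp)
    ((condIndepFun_iff_condExp_inter_preimage_eq_mul hf hg).mp hfg s t hs ht) hx

theorem CondIndepFun.setIntegral_mul_of_isMeasurableAtom {f g : Ω → ℝ}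
    (hfg : CondIndepFun m hm f g μ) (hf : Measurable f) (hg : Measurable g)
    (hD : IsMeasurableAtom m D) :
    ∫ ω in D, f ω * g ω ∂μ =
      μ.real D * ((∫ ω in D, f ω ∂μ) / μ.real D) *
        ((∫ ω in D, g ω ∂μ) / μ.real D) := by
  by_cases hμD : μ D = 0
  · simp [Measure.restrict_eq_zero.mpr hμD, measureReal_def, hμD]
  calc ∫ ω in D, f ω * g ω ∂μ = μ.real D * ∫ ω, (f * g) ω ∂μ[|D] := by
        rw [integral_cond_eq_setIntegral_div,
          mul_div_cancel₀ _ ((measureReal_ne_zero_iff (measure_ne_top μ D)).mpr hμD)]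
        rfl
    _ = μ.real D * ((∫ ω, f ω ∂μ[|D]) * ∫ ω, g ω ∂μ[|D]) := by
        rw [(hfg.indepFun_cond_of_isMeasurableAtom hf hg hD hμD).integral_mul_eq_mul_integral
          hf.aestronglyMeasurable hg.aestronglyMeasurable]
    _ = _ := by
        rw [integral_cond_eq_setIntegral_div, integral_cond_eq_setIntegral_div, mul_assoc]

end ProbabilityTheory

theorem soft_label_expectation_decomposition_general
    {Ω : Type*} [MeasurableSpace Ω] [StandardBorelSpace Ω]
    (μ : Measure Ω) [IsProbabilityMeasure μ] {d : ℕ}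
    (X : Ω → (Fin d → ℝ)) (Y S : Ω → ℝ) (Yh : (Fin d → ℝ) → ℝ)
    (hX : Measurable X) (hS : Measurable S) (hYh : Measurable Yh)
    (hYb : ∀ ω, Y ω = 0 ∨ Y ω = 1) (hS01 : ∀ ω, S ω ∈ Set.Icc (0:ℝ) 1)
    (hYhb : ∀ x, Yh x = 0 ∨ Yh x = 1)
    (hm : MeasurableSpace.comap Y inferInstance ≤ ‹MeasurableSpace Ω›)
    (hCI : CondIndepFun (MeasurableSpace.comap Y inferInstance) hm S X μ) :
    ∫ ω, S ω * Yh (X ω) ∂μ =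
      (μ {ω | Y ω = 1}).toReal *
        ((∫ ω in {ω | Y ω = 1}, S ω ∂μ) / (μ {ω | Y ω = 1}).toReal) *
        ((μ ({ω | Yh (X ω) = 1} ∩ {ω | Y ω = 1})).toReal / (μ {ω | Y ω = 1}).toReal) +
      (1 - (μ {ω | Y ω = 1}).toReal) *
        ((∫ ω in {ω | Y ω = 0}, S ω ∂μ) / (μ {ω | Y ω = 0}).toReal) *
        ((μ ({ω | Yh (X ω) = 1} ∩ {ω | Y ω = 0})).toReal / (μ {ω | Y ω = 0}).toReal) := by
  set B := {ω | Yh (X ω) = 1}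
  have hB : MeasurableSet B := hYh.comp hX (measurableSet_singleton 1)
  have hYhX : Yh ∘ X = B.indicator 1 := by
    ext ω
    rcases hYhb (X ω) with h | h <;> simp [B, h]
  have hatom (y : ℝ) : IsMeasurableAtom (MeasurableSpace.comap Y inferInstance) {ω | Y ω = y} :=
    isMeasurableAtom_comap_preimage_singleton Y y
  have hblock (y : ℝ) : ∫ ω in {ω | Y ω = y}, S ω * Yh (X ω) ∂μ =
      μ.real {ω | Y ω = y} *
        ((∫ ω in {ω | Y ω = y}, S ω ∂μ) / μ.real {ω | Y ω = y}) *
        (μ.real (B ∩ {ω | Y ω = y}) / μ.real {ω | Y ω = y}) := by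
    refine ((hCI.comp measurable_id hYh).setIntegral_mul_of_isMeasurableAtom hS (hYh.comp hX)
      (hatom y)).trans ?_
    rw [Function.id_comp, hYhX, integral_indicator_one hB, measureReal_restrict_apply hB]
  have hA : MeasurableSet {ω | Y ω = 1} := hm _ (hatom 1).1
  have hcompl : {ω | Y ω = 1}ᶜ = {ω | Y ω = 0} := by
    ext ω
    rcases hYb ω with h | h <;> simp [h]
  have hint : Integrable (fun ω ↦ S ω * Yh (X ω)) μ := by
    refine Integrable.of_bound (hS.mul (hYh.comp hX)).aestronglyMeasurable 1
      (ae_of_all _ fun ω ↦ ?_)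
    rcases hYhb (X ω) with h | h <;> simp [h, abs_of_nonneg (hS01 ω).1, (hS01 ω).2]
  simp only [← measureReal_def]
  rw [← integral_add_compl hA hint, ← probReal_compl_eq_one_sub hA, hcompl, hblock, hblock]

theorem soft_label_expectation_decomposition
    {Ω : Type*} [MeasurableSpace Ω] [StandardBorelSpace Ω] [Nonempty Ω]
    (μ : Measure Ω) [IsProbabilityMeasure μ] {d : ℕ}
    (X : Ω → (Fin d → ℝ)) (Y S : Ω → ℝ) (Yh : (Fin d → ℝ) → ℝ)
    (hX : Measurable X) (hY : Measurable Y) (hS : Measurable S) (hYh : Measurable Yh)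
    (hYb : ∀ ω, Y ω = 0 ∨ Y ω = 1) (hS01 : ∀ ω, S ω ∈ Set.Icc (0:ℝ) 1)
    (hYhb : ∀ x, Yh x = 0 ∨ Yh x = 1)
    (hm : MeasurableSpace.comap Y inferInstance ≤ ‹MeasurableSpace Ω›)
    (hCI : CondIndepFun (MeasurableSpace.comap Y inferInstance) hm S X μ)
    (hπ : 0 < μ {ω | Y ω = 1}) (hπ1 : μ {ω | Y ω = 1} < 1) :
    ∫ ω, S ω * Yh (X ω) ∂μ =
      (μ {ω | Y ω = 1}).toReal *
        ((∫ ω in {ω | Y ω = 1}, S ω ∂μ) / (μ {ω | Y ω = 1}).toReal) *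
        ((μ ({ω | Yh (X ω) = 1} ∩ {ω | Y ω = 1})).toReal / (μ {ω | Y ω = 1}).toReal) +
      (1 - (μ {ω | Y ω = 1}).toReal) *
        ((∫ ω in {ω | Y ω = 0}, S ω ∂μ) / (μ {ω | Y ω = 0}).toReal) *
        ((μ ({ω | Yh (X ω) = 1} ∩ {ω | Y ω = 0})).toReal / (μ {ω | Y ω = 0}).toReal) :=
  soft_label_expectation_decomposition_general μ X Y S Yh hX hS hYh hYb hS01 hYhb hm hCI
end

section
/- Under the Generalized SCAR assumption (S conditionally independent of X given Y), with π = P(Y=1) ∈ (0,1), S_P = E[S|Y=1], S_N = E[S|Y=0], and 0 < πS_P + (1−π)S_N < 1, define TPR_SPU = E[S·Ŷ]/E[S] and FPR_SPU = E[(1−S)·Ŷ]/E[1−S] for a classifier Ŷ = Ŷ(X). Then TPR_SPU = a·TPR + b·FPR and FPR_SPU = c·TPR + d·FPR, where a = πS_P/(πS_P+(1−π)S_N), b = (1−π)S_N/(πS_P+(1−π)S_N), c = π(1−S_P)/(1−πS_P−(1−π)S_N), d = (1−π)(1−S_N)/(1−πS_P−(1−π)S_N). -/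
/-!
Conditioning on `Y` reduces everything to the two fibres `{Y = 1}` and `{Y = 0}`. The conditional
expectation given `Y` is constant on each fibre of positive measure, where it equals the fibre
average, so conditional independence of `S` and `X` given `Y` becomes plain independence of `S`
and `X` under `μ[|Y = y]`. Hence on each fibre the average of `S * Ŷ` is the product of the
averages, i.e. `S_P * TPR` and `S_N * FPR`, and the law of total expectation gives
`E[S Ŷ] = π S_P TPR + (1 - π) S_N FPR`, `E[S] = π S_P + (1 - π) S_N` and
`E[Ŷ] = π TPR + (1 - π) FPR`; the claimed identities are these divided by `E[S]` and `E[1 - S]`.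
-/

open MeasureTheory ProbabilityTheory Set

section

variable {Ω : Type*} {mΩ : MeasurableSpace Ω} {μ : Measure Ω}

lemma setAverage_eq_div (f : Ω → ℝ) (s : Set Ω) :
    ⨍ x in s, f x ∂μ = (∫ x in s, f x ∂μ) / μ.real s := by
  rw [setAverage_eq, smul_eq_mul, inv_mul_eq_div]

lemma integral_cond_eq_setAverage {E : Type*} [NormedAddCommGroup E] [NormedSpace ℝ E]
    (f : Ω → E) (s : Set Ω) : ∫ x, f x ∂μ[|s] = ⨍ x in s, f x ∂μ := by
  rw [ProbabilityTheory.cond, integral_smul_measure, setAverage_eq, ENNReal.toReal_inv,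
    measureReal_def]

lemma integral_eq_measureReal_mul_setAverage_add [IsFiniteMeasure μ] {f : Ω → ℝ}
    (hf : Integrable f μ) {s : Set Ω} (hs : MeasurableSet s) :
    ∫ x, f x ∂μ =
      μ.real s * ⨍ x in s, f x ∂μ + μ.real sᶜ * ⨍ x in sᶜ, f x ∂μ := by
  rw [← smul_eq_mul, measure_smul_setAverage _ (measure_ne_top μ s), ← smul_eq_mul,
    measure_smul_setAverage _ (measure_ne_top μ sᶜ), integral_add_compl hs hf]

lemma setIntegral_eq_measureReal_inter_of_zero_or_one {f : Ω → ℝ} (hf : Measurable f)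
    (hf01 : ∀ x, f x = 0 ∨ f x = 1) (s : Set Ω) :
    ∫ x in s, f x ∂μ = μ.real ({x | f x = 1} ∩ s) := by
  have hB : MeasurableSet {x | f x = 1} := hf (measurableSet_singleton 1)
  calc ∫ x in s, f x ∂μ = ∫ x in s, {x | f x = 1}.indicator 1 x ∂μ := by
        congr 1; funext x; rcases hf01 x with h | h <;> simp [h]
    _ = μ.real ({x | f x = 1} ∩ s) := by
        rw [integral_indicator_one hB, measureReal_restrict_apply hB]

lemma Measurable.apply_eq_apply_of_comap {β γ : Type*} [MeasurableSpace β]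
    [MeasurableSpace γ] [MeasurableSingletonClass γ] {Y : Ω → β} {f : Ω → γ}
    (hf : Measurable[MeasurableSpace.comap Y inferInstance] f) {ω ω' : Ω} (h : Y ω' = Y ω) :
    f ω' = f ω := by
  obtain ⟨t, -, ht⟩ := hf (measurableSet_singleton (f ω))
  have hω : ω ∈ Y ⁻¹' t := by rw [ht]; rfl
  have hω' : ω' ∈ Y ⁻¹' t := show Y ω' ∈ t from h ▸ hω
  rwa [ht] at hω'

lemma condExp_comap_apply [IsFiniteMeasure μ] {β : Type*} [MeasurableSpace β]
    [MeasurableSingletonClass β] {Y : Ω → β} (hY : Measurable Y) {f : Ω → ℝ}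
    (hf : Integrable f μ) {ω : Ω} (hω : μ (Y ⁻¹' {Y ω}) ≠ 0) :
    μ[f | MeasurableSpace.comap Y inferInstance] ω = ∫ x, f x ∂μ[|Y ⁻¹' {Y ω}] := by
  set F := Y ⁻¹' {Y ω}
  set c := μ[f | MeasurableSpace.comap Y inferInstance]
  have hF : MeasurableSet[MeasurableSpace.comap Y inferInstance] F :=
    ⟨{Y ω}, measurableSet_singleton _, rfl⟩
  have hc : ∀ x ∈ F, c x = c ω := fun x hx =>
    stronglyMeasurable_condExp.measurable.apply_eq_apply_of_comap hx
  have hμF : μ.real F ≠ 0 := (measureReal_ne_zero_iff (measure_ne_top μ F)).2 hω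
  have hcF : ∫ x in F, c x ∂μ = μ.real F * c ω := by
    rw [setIntegral_congr_fun (hY.comap_le _ hF) hc, setIntegral_const, smul_eq_mul]
  rw [integral_cond_eq_setAverage, setAverage_eq, ← setIntegral_condExp hY.comap_le hf hF, hcF,
    smul_eq_mul, inv_mul_cancel_left₀ hμF]

namespace ProbabilityTheory

lemma CondIndepFun.indepFun_cond_preimage_singleton [StandardBorelSpace Ω] [IsFiniteMeasure μ]
    {β γ δ : Type*} [MeasurableSpace β] [MeasurableSingletonClass β] [MeasurableSpace γ]
    [MeasurableSpace δ] {Y : Ω → β} (hY : Measurable Y) {f : Ω → γ} {g : Ω → δ}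
    (hf : Measurable f) (hg : Measurable g)
    (h : CondIndepFun (MeasurableSpace.comap Y inferInstance) hY.comap_le f g μ) (y : β) :
    IndepFun f g (μ[|Y ⁻¹' {y}]) := by
  rw [indepFun_iff_measure_inter_preimage_eq_mul]
  intro s t hs ht
  by_cases hF : μ (Y ⁻¹' {y}) = 0
  · simp [cond_eq_zero_of_meas_eq_zero hF]
  obtain ⟨ω, rfl, hω⟩ := Measure.exists_mem_of_measure_ne_zero_of_ae hF
    (ae_restrict_of_ae ((condIndepFun_iff_condExp_inter_preimage_eq_mul hf hg).1 h s t hs ht))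
  have hval : ∀ E, MeasurableSet E →
      (μ⟦E | MeasurableSpace.comap Y inferInstance⟧) ω = (μ[|Y ⁻¹' {Y ω}]).real E := by
    intro E hE
    rw [condExp_comap_apply hY ((integrable_const 1).indicator hE) hF,
      integral_indicator_const _ hE, smul_eq_mul, mul_one]
  simp only [hval _ ((hf hs).inter (hg ht)), hval _ (hf hs), hval _ (hg ht)] at hω
  rwa [← ENNReal.toReal_eq_toReal_iff' (measure_ne_top _ _)
    (ENNReal.mul_ne_top (measure_ne_top _ _) (measure_ne_top _ _)), ENNReal.toReal_mul]

lemma IndepFun.setAverage_mul {s : Set Ω} {f g : Ω → ℝ} (h : IndepFun f g (μ[|s]))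
    (hf : Measurable f) (hg : Measurable g) :
    ⨍ x in s, f x * g x ∂μ = (⨍ x in s, f x ∂μ) * ⨍ x in s, g x ∂μ := by
  simp only [← integral_cond_eq_setAverage]
  exact h.integral_mul_eq_mul_integral hf.aestronglyMeasurable hg.aestronglyMeasurable

lemma integral_mul_eq_of_indepFun_cond_of_compl [IsFiniteMeasure μ] {f g : Ω → ℝ}
    (hf : Measurable f) (hg : Measurable g) (hfg : Integrable (fun x => f x * g x) μ)
    {s : Set Ω} (hs : MeasurableSet s) (h : IndepFun f g (μ[|s]))
    (hc : IndepFun f g (μ[|sᶜ])) :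
    ∫ x, f x * g x ∂μ = μ.real s * ((⨍ x in s, f x ∂μ) * ⨍ x in s, g x ∂μ)
      + μ.real sᶜ * ((⨍ x in sᶜ, f x ∂μ) * ⨍ x in sᶜ, g x ∂μ) := by
  rw [integral_eq_measureReal_mul_setAverage_add hfg hs, h.setAverage_mul hf hg,
    hc.setAverage_mul hf hg]

end ProbabilityTheory

end

theorem spu_rates_linear_in_true_rates_general
    {Ω : Type*} [MeasurableSpace Ω] [StandardBorelSpace Ω]
    (μ : Measure Ω) [IsProbabilityMeasure μ] {d : ℕ}
    (X : Ω → (Fin d → ℝ)) (Y S : Ω → ℝ) (Yh : (Fin d → ℝ) → ℝ)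
    (hX : Measurable X) (hY : Measurable Y) (hS : Measurable S) (hYh : Measurable Yh)
    (hYb : ∀ ω, Y ω = 0 ∨ Y ω = 1) (hS01 : ∀ ω, S ω ∈ Set.Icc (0:ℝ) 1)
    (hYhb : ∀ x, Yh x = 0 ∨ Yh x = 1)
    (hm : MeasurableSpace.comap Y inferInstance ≤ ‹MeasurableSpace Ω›)
    (hCI : CondIndepFun (MeasurableSpace.comap Y inferInstance) hm S X μ)
    (π SP SN TPR FPR TPRS FPRS : ℝ)
    (hπdef : π = (μ {ω | Y ω = 1}).toReal)
    (hSP : SP = (∫ ω in {ω | Y ω = 1}, S ω ∂μ) / π)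
    (hSN : SN = (∫ ω in {ω | Y ω = 0}, S ω ∂μ) / (1 - π))
    (hTPR : TPR = (μ ({ω | Yh (X ω) = 1} ∩ {ω | Y ω = 1})).toReal / π)
    (hFPR : FPR = (μ ({ω | Yh (X ω) = 1} ∩ {ω | Y ω = 0})).toReal / (1 - π))
    (hTPRS : TPRS = (∫ ω, S ω * Yh (X ω) ∂μ) / (∫ ω, S ω ∂μ))
    (hFPRS : FPRS = (∫ ω, (1 - S ω) * Yh (X ω) ∂μ) / (∫ ω, (1 - S ω) ∂μ)) :
    TPRS = (π * SP / (π * SP + (1 - π) * SN)) * TPR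
            + ((1 - π) * SN / (π * SP + (1 - π) * SN)) * FPR ∧
    FPRS = (π * (1 - SP) / (1 - π * SP - (1 - π) * SN)) * TPR
            + ((1 - π) * (1 - SN) / (1 - π * SP - (1 - π) * SN)) * FPR := by
  set Z : Ω → ℝ := fun ω => Yh (X ω)
  set A : Set Ω := {ω | Y ω = 1}
  have hZ : Measurable Z := hYh.comp hX
  have hZ01 : ∀ ω, Z ω = 0 ∨ Z ω = 1 := fun ω => hYhb (X ω)
  have hA : MeasurableSet A := hY (measurableSet_singleton 1)
  have hAc : {ω | Y ω = 0} = Aᶜ := by ext ω; rcases hYb ω with h | h <;> simp [A, h]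
  rw [hAc] at hSN hFPR
  have hμA : μ.real A = π := hπdef.symm
  have hμAc : μ.real Aᶜ = 1 - π := by rw [probReal_compl_eq_one_sub hA, hμA]
  obtain ⟨rfl, rfl, rfl, rfl⟩ : SP = ⨍ ω in A, S ω ∂μ ∧ SN = ⨍ ω in Aᶜ, S ω ∂μ ∧
      TPR = ⨍ ω in A, Z ω ∂μ ∧ FPR = ⨍ ω in Aᶜ, Z ω ∂μ := by
    simp only [setAverage_eq_div, setIntegral_eq_measureReal_inter_of_zero_or_one hZ hZ01, hμA,
      hμAc]
    exact ⟨hSP, hSN, hTPR, hFPR⟩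
  have hIndA : IndepFun S Z (μ[|A]) :=
    (hCI.indepFun_cond_preimage_singleton hY hS hX 1).comp measurable_id hYh
  have hIndAc : IndepFun S Z (μ[|Aᶜ]) :=
    hAc ▸ (hCI.indepFun_cond_preimage_singleton hY hS hX 0).comp measurable_id hYh
  have hZbdd : ∀ ω, ‖Z ω‖ ≤ 1 := fun ω => by rcases hZ01 ω with h | h <;> simp [h]
  have hSint : Integrable S μ := .of_mem_Icc 0 1 hS.aemeasurable (ae_of_all _ hS01)
  have hZint : Integrable Z μ := .of_bound hZ.aestronglyMeasurable 1 (ae_of_all _ hZbdd)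
  have hSZint := hSint.mul_bdd hZ.aestronglyMeasurable (ae_of_all _ hZbdd)
  have hES := integral_eq_measureReal_mul_setAverage_add hSint hA
  have hEZ := integral_eq_measureReal_mul_setAverage_add hZint hA
  have hESZ := integral_mul_eq_of_indepFun_cond_of_compl hS hZ hSZint hA hIndA hIndAc
  have hE1S : ∫ ω, (1 - S ω) ∂μ = 1 - ∫ ω, S ω ∂μ := by
    rw [integral_sub (integrable_const 1) hSint]; simp
  have hE1SZ : ∫ ω, (1 - S ω) * Z ω ∂μ = ∫ ω, Z ω ∂μ - ∫ ω, S ω * Z ω ∂μ := by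
    simp only [sub_mul, one_mul]; exact integral_sub hZint hSZint
  rw [hμA, hμAc] at hES hEZ hESZ
  constructor
  · rw [hTPRS, hESZ, hES]; ring
  · rw [hFPRS, hE1SZ, hE1S, hEZ, hESZ, hES]; ring

theorem spu_rates_linear_in_true_rates
    {Ω : Type*} [MeasurableSpace Ω] [StandardBorelSpace Ω] [Nonempty Ω]
    (μ : Measure Ω) [IsProbabilityMeasure μ] {d : ℕ}
    (X : Ω → (Fin d → ℝ)) (Y S : Ω → ℝ) (Yh : (Fin d → ℝ) → ℝ)
    (hX : Measurable X) (hY : Measurable Y) (hS : Measurable S) (hYh : Measurable Yh)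
    (hYb : ∀ ω, Y ω = 0 ∨ Y ω = 1) (hS01 : ∀ ω, S ω ∈ Set.Icc (0:ℝ) 1)
    (hYhb : ∀ x, Yh x = 0 ∨ Yh x = 1)
    (hm : MeasurableSpace.comap Y inferInstance ≤ ‹MeasurableSpace Ω›)
    (hCI : CondIndepFun (MeasurableSpace.comap Y inferInstance) hm S X μ)
    (π SP SN TPR FPR TPRS FPRS : ℝ)
    (hπdef : π = (μ {ω | Y ω = 1}).toReal)
    (hπpos : 0 < π) (hπlt : π < 1)
    (hSP : SP = (∫ ω in {ω | Y ω = 1}, S ω ∂μ) / π)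
    (hSN : SN = (∫ ω in {ω | Y ω = 0}, S ω ∂μ) / (1 - π))
    (hTPR : TPR = (μ ({ω | Yh (X ω) = 1} ∩ {ω | Y ω = 1})).toReal / π)
    (hFPR : FPR = (μ ({ω | Yh (X ω) = 1} ∩ {ω | Y ω = 0})).toReal / (1 - π))
    (hTPRS : TPRS = (∫ ω, S ω * Yh (X ω) ∂μ) / (∫ ω, S ω ∂μ))
    (hFPRS : FPRS = (∫ ω, (1 - S ω) * Yh (X ω) ∂μ) / (∫ ω, (1 - S ω) ∂μ))
    (hden0 : 0 < π * SP + (1 - π) * SN) (hden1 : π * SP + (1 - π) * SN < 1) :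
    TPRS = (π * SP / (π * SP + (1 - π) * SN)) * TPR
            + ((1 - π) * SN / (π * SP + (1 - π) * SN)) * FPR ∧
    FPRS = (π * (1 - SP) / (1 - π * SP - (1 - π) * SN)) * TPR
            + ((1 - π) * (1 - SN) / (1 - π * SP - (1 - π) * SN)) * FPR :=
  spu_rates_linear_in_true_rates_general μ X Y S Yh hX hY hS hYh hYb hS01 hYhb hm hCI π SP SN TPR
    FPR TPRS FPRS hπdef hSP hSN hTPR hFPR hTPRS hFPRS
end

section
/- Let a, b, c, d be nonnegative reals with a + b = 1 and c + d = 1. Suppose TPR, FPR : [0,1] → [0,1] are continuously differentiable curves parametrized by a threshold, with TPR and FPR both decreasing from 1 to 0, and define TPR_SPU = a·TPR + b·FPR, FPR_SPU = c·TPR + d·FPR, AUC = ∫ TPR d(FPR), AUC_SPU = ∫ TPR_SPU d(FPR_SPU) (integrals over the full parametrization, oriented so FPR goes from 0 to 1). Then AUC_SPU = (b+c)/2 + (ad − bc)·AUC. -/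
/-!
Pointwise, `(a f + b g) (c f + d g)' = (a d - b c) f g' + Φ'` with
`Φ = (a c f² + b d g²) / 2 + b c f g`, so up to the boundary term `Φ 1 - Φ 0` the AUC
transforms by the determinant `a d - b c`. Both curves go from `1` to `0`, and
`a + b = c + d = 1` turns `Φ 0 - Φ 1` into `(b + c) / 2`.
-/

open MeasureTheory intervalIntegral

section

variable {f g : ℝ → ℝ}

theorem hasDerivAt_quadratic_form (hf : Differentiable ℝ f) (hg : Differentiable ℝ g)
    (p q r t : ℝ) :
    HasDerivAt (fun u => p / 2 * f u ^ 2 + q * (f u * g u) + r / 2 * g u ^ 2)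
      (p * (f t * deriv f t) + q * (deriv f t * g t + f t * deriv g t)
        + r * (g t * deriv g t)) t := by
  have hft := (hf t).hasDerivAt
  have hgt := (hg t).hasDerivAt
  refine ((((hft.pow 2).const_mul (p / 2)).add ((hft.mul hgt).const_mul q)).add
    ((hgt.pow 2).const_mul (r / 2))).congr_deriv ?_
  ring

theorem integral_lincomb_mul_deriv_lincomb (hf : ContDiff ℝ 1 f) (hg : ContDiff ℝ 1 g)
    (a b c d x y : ℝ) :
    ∫ t in x..y, (a * f t + b * g t) * deriv (fun u => c * f u + d * g u) t
      = (a * d - b * c) * (∫ t in x..y, f t * deriv g t)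
        + ((a * c / 2 * f y ^ 2 + b * c * (f y * g y) + b * d / 2 * g y ^ 2)
          - (a * c / 2 * f x ^ 2 + b * c * (f x * g x) + b * d / 2 * g x ^ 2)) := by
  have hfd := hf.differentiable one_ne_zero
  have hgd := hg.differentiable one_ne_zero
  have hf' := hf.continuous_deriv le_rfl
  have hg' := hg.continuous_deriv le_rfl
  have hderiv (t : ℝ) : deriv (fun u => c * f u + d * g u) t = c * deriv f t + d * deriv g t :=
    (((hfd t).hasDerivAt.const_mul c).add ((hgd t).hasDerivAt.const_mul d)).deriv
  have hsplit (t : ℝ) : (a * f t + b * g t) * deriv (fun u => c * f u + d * g u) t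
      = (a * d - b * c) * (f t * deriv g t)
        + (a * c * (f t * deriv f t) + b * c * (deriv f t * g t + f t * deriv g t)
          + b * d * (g t * deriv g t)) := by
    rw [hderiv]
    ring
  simp_rw [hsplit]
  rw [intervalIntegral.integral_add, intervalIntegral.integral_const_mul,
    integral_eq_sub_of_hasDerivAt (fun t _ => hasDerivAt_quadratic_form hfd hgd _ _ _ t)]
  all_goals
    apply Continuous.intervalIntegrable
    fun_prop

end

theorem auc_spu_affine_in_auc_general
    (a b c d : ℝ)
    (hab : a + b = 1) (hcd : c + d = 1)
    (TPR FPR : ℝ → ℝ) (hT : ContDiff ℝ 1 TPR) (hF : ContDiff ℝ 1 FPR)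
    (hT0 : TPR 0 = 1) (hT1 : TPR 1 = 0) (hF0 : FPR 0 = 1) (hF1 : FPR 1 = 0) :
    (-∫ t in (0:ℝ)..1, (a * TPR t + b * FPR t) * deriv (fun u => c * TPR u + d * FPR u) t)
      = (b + c) / 2 + (a * d - b * c) * (-∫ t in (0:ℝ)..1, TPR t * deriv FPR t) := by
  rw [integral_lincomb_mul_deriv_lincomb hT hF, hT0, hT1, hF0, hF1]
  linear_combination (c / 2) * hab + (b / 2) * hcd

theorem auc_spu_affine_in_auc
    (a b c d : ℝ) (ha : 0 ≤ a) (hb : 0 ≤ b) (hc : 0 ≤ c) (hd : 0 ≤ d)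
    (hab : a + b = 1) (hcd : c + d = 1)
    (TPR FPR : ℝ → ℝ) (hT : ContDiff ℝ 1 TPR) (hF : ContDiff ℝ 1 FPR)
    (hT01 : ∀ t ∈ Set.Icc (0:ℝ) 1, TPR t ∈ Set.Icc (0:ℝ) 1)
    (hF01 : ∀ t ∈ Set.Icc (0:ℝ) 1, FPR t ∈ Set.Icc (0:ℝ) 1)
    (hT0 : TPR 0 = 1) (hT1 : TPR 1 = 0) (hF0 : FPR 0 = 1) (hF1 : FPR 1 = 0)
    (hTanti : AntitoneOn TPR (Set.Icc 0 1)) (hFanti : AntitoneOn FPR (Set.Icc 0 1)) :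
    (-∫ t in (0:ℝ)..1, (a * TPR t + b * FPR t) * deriv (fun u => c * TPR u + d * FPR u) t)
      = (b + c) / 2 + (a * d - b * c) * (-∫ t in (0:ℝ)..1, TPR t * deriv FPR t) :=
  auc_spu_affine_in_auc_general a b c d hab hcd TPR FPR hT hF hT0 hT1 hF0 hF1
end

section
/- Suppose S and X are conditionally independent given Y ∈ {0,1}, with S_P = E[S|Y=1], S_N = E[S|Y=0]. Then almost surely E[S | X] = (S_P − S_N)·P(Y=1 | X) + S_N. In particular, if S_P > S_N, there is a strictly increasing affine function h with E[S|X] = h(P(Y=1|X)). -/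
open MeasureTheory ProbabilityTheory Set

/-!
A function measurable for `σ(Y)` is constant on each level set `{Y = y}`, so conditional
independence of `S` and `X` given `σ(Y)` makes them independent under `μ[|Y = y]`. Hence for
every event `E ∈ σ(X)`, `∫_{E ∩ {Y = y}} S = E[S | Y = y] · P(E ∩ {Y = y})`. For binary `Y` this
says that `S` and `S_P · Y + S_N · (1 - Y)` have the same integral over every set of `σ(X)`, so
they have the same conditional expectation given `X`, which is affine in `E[Y | X]`.
-/

namespace ProbabilityTheory

variable {Ω δ : Type*} {mΩ : MeasurableSpace Ω} [MeasurableSpace δ] {Y : Ω → δ}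

lemma apply_eq_of_measurable_comap {γ : Type*} [MeasurableSpace γ] [MeasurableSingletonClass γ]
    {h : Ω → γ} (hh : Measurable[MeasurableSpace.comap Y inferInstance] h) {ω ω' : Ω}
    (hY : Y ω = Y ω') : h ω = h ω' := by
  obtain ⟨B, -, hB⟩ := hh (measurableSet_singleton (h ω))
  have hω' : ω' ∈ Y ⁻¹' B := by
    rw [mem_preimage, ← hY, ← mem_preimage, hB]
    rfl
  rw [hB] at hω'
  exact hω'.symm

variable [MeasurableSingletonClass δ]

lemma setIntegral_fiber_of_measurable_comap (hm : MeasurableSpace.comap Y inferInstance ≤ mΩ)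
    (μ : Measure Ω) {h : Ω → ℝ} (hh : Measurable[MeasurableSpace.comap Y inferInstance] h)
    {y : δ} {ω : Ω} (hω : Y ω = y) :
    ∫ x in Y ⁻¹' {y}, h x ∂μ = μ.real (Y ⁻¹' {y}) * h ω := by
  rw [setIntegral_congr_fun (hm _ (comap_measurable Y (measurableSet_singleton y)))
    (fun x hx => apply_eq_of_measurable_comap hh (hx.trans hω.symm)), setIntegral_const,
    smul_eq_mul]

lemma setIntegral_fiber_inter_comp (μ : Measure Ω) (hY : Measurable Y) {s : Set Ω}
    (hs : MeasurableSet s) (φ : δ → ℝ) (y : δ) :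
    ∫ x in Y ⁻¹' {y} ∩ s, φ (Y x) ∂μ = μ.real (Y ⁻¹' {y} ∩ s) * φ y := by
  rw [setIntegral_congr_fun ((hY (measurableSet_singleton y)).inter hs)
    (fun x hx => congrArg φ hx.1), setIntegral_const, smul_eq_mul]

variable {μ : Measure Ω} [IsFiniteMeasure μ]

lemma measureReal_fiber_mul_condExp (hm : MeasurableSpace.comap Y inferInstance ≤ mΩ)
    {f : Ω → ℝ} (hf : Integrable f μ) {y : δ} {ω : Ω} (hω : Y ω = y) :
    μ.real (Y ⁻¹' {y}) * μ[f | MeasurableSpace.comap Y inferInstance] ω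
      = ∫ x in Y ⁻¹' {y}, f x ∂μ := by
  rw [← setIntegral_fiber_of_measurable_comap hm μ stronglyMeasurable_condExp.measurable hω,
    setIntegral_condExp hm hf (comap_measurable Y (measurableSet_singleton y))]

lemma measureReal_fiber_mul_condExp_indicator (hm : MeasurableSpace.comap Y inferInstance ≤ mΩ)
    {B : Set Ω} (hB : MeasurableSet B) {y : δ} {ω : Ω} (hω : Y ω = y) :
    μ.real (Y ⁻¹' {y}) * (μ⟦B | MeasurableSpace.comap Y inferInstance⟧) ω
      = μ.real (Y ⁻¹' {y} ∩ B) := by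
  rw [measureReal_fiber_mul_condExp hm ((integrable_const 1).indicator hB) hω,
    setIntegral_indicator hB, setIntegral_const, smul_eq_mul, mul_one]

variable [StandardBorelSpace Ω] {β γ : Type*} [MeasurableSpace β] [MeasurableSpace γ]
  {f : Ω → β} {g : Ω → γ} {hm : MeasurableSpace.comap Y inferInstance ≤ mΩ}

lemma CondIndepFun.measureReal_fiber_inter_mul
    (hfg : CondIndepFun (MeasurableSpace.comap Y inferInstance) hm f g μ)
    (hf : Measurable f) (hg : Measurable g) {s : Set β} {t : Set γ}
    (hs : MeasurableSet s) (ht : MeasurableSet t) {y : δ} {ω : Ω} (hω : Y ω = y) :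
    μ.real (Y ⁻¹' {y} ∩ (f ⁻¹' s ∩ g ⁻¹' t)) * μ.real (Y ⁻¹' {y})
      = μ.real (Y ⁻¹' {y} ∩ f ⁻¹' s) * μ.real (Y ⁻¹' {y} ∩ g ⁻¹' t) := by
  set m := MeasurableSpace.comap Y inferInstance
  have hprod := (condIndepFun_iff_condExp_inter_preimage_eq_mul hf hg).1 hfg s t hs ht
  have hs' := measureReal_fiber_mul_condExp_indicator (μ := μ) hm (hf hs) hω
  have ht' := measureReal_fiber_mul_condExp_indicator (μ := μ) hm (hg ht) hω
  have hst : μ.real (Y ⁻¹' {y} ∩ (f ⁻¹' s ∩ g ⁻¹' t))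
      = μ.real (Y ⁻¹' {y}) * ((μ⟦f ⁻¹' s | m⟧) ω * (μ⟦g ⁻¹' t | m⟧) ω) := by
    calc _ = μ.real (Y ⁻¹' {y}) * (μ⟦f ⁻¹' s ∩ g ⁻¹' t | m⟧) ω :=
          (measureReal_fiber_mul_condExp_indicator hm ((hf hs).inter (hg ht)) hω).symm
      _ = ∫ x in Y ⁻¹' {y}, (μ⟦f ⁻¹' s ∩ g ⁻¹' t | m⟧) x ∂μ :=
          (setIntegral_fiber_of_measurable_comap hm μ stronglyMeasurable_condExp.measurable hω).symm
      _ = ∫ x in Y ⁻¹' {y}, (μ⟦f ⁻¹' s | m⟧) x * (μ⟦g ⁻¹' t | m⟧) x ∂μ :=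
          integral_congr_ae (ae_restrict_of_ae hprod)
      _ = _ := setIntegral_fiber_of_measurable_comap hm μ
          (stronglyMeasurable_condExp.measurable.mul stronglyMeasurable_condExp.measurable) hω
  linear_combination μ.real (Y ⁻¹' {y}) * hst
    + μ.real (Y ⁻¹' {y}) * (μ⟦g ⁻¹' t | m⟧) ω * hs' + μ.real (Y ⁻¹' {y} ∩ f ⁻¹' s) * ht'

lemma CondIndepFun.indepFun_cond_fiber
    (hfg : CondIndepFun (MeasurableSpace.comap Y inferInstance) hm f g μ)
    (hf : Measurable f) (hg : Measurable g) (y : δ) : IndepFun f g μ[|Y ⁻¹' {y}] := by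
  rcases eq_or_ne (μ (Y ⁻¹' {y})) 0 with hA | hA
  · rw [cond_eq_zero_of_meas_eq_zero hA]
    exact indepFun_iff_measure_inter_preimage_eq_mul.2 fun _ _ _ _ => by simp
  obtain ⟨ω, hω⟩ := nonempty_of_measure_ne_zero hA
  have hAm := hm _ (comap_measurable Y (measurableSet_singleton y))
  refine indepFun_iff_measure_inter_preimage_eq_mul.2 fun s t hs ht => ?_
  have key := hfg.measureReal_fiber_inter_mul hf hg hs ht hω
  have hA' : μ.real (Y ⁻¹' {y}) ≠ 0 := (measureReal_ne_zero_iff (by finiteness)).2 hA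
  rw [← ENNReal.toReal_eq_toReal_iff' (by finiteness) (by finiteness)]
  simp only [cond_apply hAm, ENNReal.toReal_mul, ENNReal.toReal_inv, ← measureReal_def]
  field_simp
  linear_combination key

lemma CondIndepFun.setIntegral_fiber_inter_preimage {f : Ω → ℝ}
    (hfg : CondIndepFun (MeasurableSpace.comap Y inferInstance) hm f g μ)
    (hf : Measurable f) (hg : Measurable g) {t : Set γ} (ht : MeasurableSet t) (y : δ) :
    ∫ x in Y ⁻¹' {y} ∩ g ⁻¹' t, f x ∂μ
      = (∫ x in Y ⁻¹' {y}, f x ∂μ) / μ.real (Y ⁻¹' {y}) * μ.real (Y ⁻¹' {y} ∩ g ⁻¹' t) := by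
  -- on a null fiber both sides vanish, the right one through `x / 0 = 0`
  rcases eq_or_ne (μ (Y ⁻¹' {y})) 0 with hA | hA
  · simp [setIntegral_measure_zero _ (measure_mono_null inter_subset_left hA), measureReal_def, hA]
  have hA' : μ.real (Y ⁻¹' {y}) ≠ 0 := (measureReal_ne_zero_iff (by finiteness)).2 hA
  have integral_cond (h : Ω → ℝ) :
      ∫ x, h x ∂μ[|Y ⁻¹' {y}] = (μ.real (Y ⁻¹' {y}))⁻¹ * ∫ x in Y ⁻¹' {y}, h x ∂μ := by
    simp only [cond, integral_smul_measure, ENNReal.toReal_inv, ← measureReal_def, smul_eq_mul]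
  have hind_meas : Measurable (t.indicator fun _ => (1 : ℝ)) := measurable_const.indicator ht
  have hind := ((hfg.indepFun_cond_fiber hf hg y).comp measurable_id
    hind_meas).integral_fun_mul_eq_mul_integral
    hf.aestronglyMeasurable (hind_meas.comp hg).aestronglyMeasurable
  have hind_comp : (fun x => t.indicator (fun _ => (1 : ℝ)) (g x)) = (g ⁻¹' t).indicator 1 := by
    ext x
    by_cases hx : g x ∈ t <;> simp [hx]
  have hmul : (fun x => f x * t.indicator (fun _ => (1 : ℝ)) (g x)) = (g ⁻¹' t).indicator f := by
    ext x
    by_cases hx : g x ∈ t <;> simp [hx]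
  simp only [Function.comp_apply, id, integral_cond, hind_comp, hmul,
    setIntegral_indicator (hg ht), Pi.one_apply, setIntegral_const, smul_eq_mul, mul_one] at hind
  field_simp at hind ⊢
  linear_combination hind

end ProbabilityTheory

lemma MeasureTheory.condExp_ae_eq_of_forall_setIntegral_eq {α E : Type*} [NormedAddCommGroup E]
    [NormedSpace ℝ E] [CompleteSpace E] {m m₀ : MeasurableSpace α} {μ : Measure α} (hm : m ≤ m₀)
    [SigmaFinite (μ.trim hm)] {f g : α → E} (hf : Integrable f μ) (hg : Integrable g μ)
    (hfg : ∀ s, MeasurableSet[m] s → ∫ x in s, f x ∂μ = ∫ x in s, g x ∂μ) :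
    μ[f | m] =ᵐ[μ] μ[g | m] :=
  ae_eq_condExp_of_forall_setIntegral_eq hm hg (fun _ _ _ => integrable_condExp.integrableOn)
    (fun s hs _ => by rw [setIntegral_condExp hm hf hs, hfg s hs])
    stronglyMeasurable_condExp.aestronglyMeasurable

lemma MeasureTheory.setIntegral_eq_fiber_one_add_fiber_zero {Ω : Type*} [MeasurableSpace Ω]
    {μ : Measure Ω} {Y : Ω → ℝ} (hY : Measurable Y) (hYb : ∀ ω, Y ω = 0 ∨ Y ω = 1)
    {s : Set Ω} {f : Ω → ℝ} (hf : IntegrableOn f s μ) :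
    ∫ x in s, f x ∂μ = ∫ x in Y ⁻¹' {1} ∩ s, f x ∂μ + ∫ x in Y ⁻¹' {0} ∩ s, f x ∂μ := by
  have hdiff : s \ Y ⁻¹' {1} = Y ⁻¹' {0} ∩ s := by
    ext ω
    rcases hYb ω with h | h <;> simp [h, and_comm]
  rw [← integral_inter_add_sdiff (hY (measurableSet_singleton 1)) hf, hdiff, inter_comm]

theorem condexp_soft_label_affine_in_posterior_general
    {Ω : Type*} [MeasurableSpace Ω] [StandardBorelSpace Ω]
    (μ : Measure Ω) [IsProbabilityMeasure μ] {d : ℕ}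
    (X : Ω → (Fin d → ℝ)) (Y S : Ω → ℝ)
    (hX : Measurable X) (hY : Measurable Y) (hS : Measurable S)
    (hYb : ∀ ω, Y ω = 0 ∨ Y ω = 1) (hS01 : ∀ ω, S ω ∈ Set.Icc (0:ℝ) 1)
    (hm : MeasurableSpace.comap Y inferInstance ≤ ‹MeasurableSpace Ω›)
    (hCI : CondIndepFun (MeasurableSpace.comap Y inferInstance) hm S X μ)
    (SP SN : ℝ)
    (hSP : SP = (∫ ω in {ω | Y ω = 1}, S ω ∂μ) / (μ {ω | Y ω = 1}).toReal)
    (hSN : SN = (∫ ω in {ω | Y ω = 0}, S ω ∂μ) / (μ {ω | Y ω = 0}).toReal) :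
    (μ[S|MeasurableSpace.comap X inferInstance] =ᵐ[μ]
      fun ω => (SP - SN) * ((μ[Y|MeasurableSpace.comap X inferInstance]) ω) + SN) ∧
    (SN < SP → ∃ h : ℝ → ℝ, StrictMono h ∧ (∀ t, h t = (SP - SN) * t + SN) ∧
      μ[S|MeasurableSpace.comap X inferInstance] =ᵐ[μ]
        fun ω => h ((μ[Y|MeasurableSpace.comap X inferInstance]) ω)) := by
  set φ : ℝ → ℝ := fun y => (SP - SN) * y + SN
  have hSint : Integrable S μ := .of_bound hS.aestronglyMeasurable 1 (.of_forall fun ω => by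
    rw [Real.norm_eq_abs, abs_le]; exact ⟨by linarith [(hS01 ω).1], (hS01 ω).2⟩)
  have hYint : Integrable Y μ := .of_bound hY.aestronglyMeasurable 1 (.of_forall fun ω => by
    rcases hYb ω with h | h <;> simp [h])
  have hφY : Integrable (fun ω => φ (Y ω)) μ := (hYint.const_mul _).add (integrable_const _)
  have hcond : μ[S|MeasurableSpace.comap X inferInstance] =ᵐ[μ]
      μ[fun ω => φ (Y ω)|MeasurableSpace.comap X inferInstance] := by
    have hSP' : (∫ x in Y ⁻¹' {1}, S x ∂μ) / μ.real (Y ⁻¹' {1}) = SP := hSP.symm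
    have hSN' : (∫ x in Y ⁻¹' {0}, S x ∂μ) / μ.real (Y ⁻¹' {0}) = SN := hSN.symm
    refine condExp_ae_eq_of_forall_setIntegral_eq hX.comap_le hSint hφY ?_
    rintro _ ⟨t, ht, rfl⟩
    rw [setIntegral_eq_fiber_one_add_fiber_zero hY hYb hSint.integrableOn,
      setIntegral_eq_fiber_one_add_fiber_zero hY hYb hφY.integrableOn,
      hCI.setIntegral_fiber_inter_preimage hS hX ht, hCI.setIntegral_fiber_inter_preimage hS hX ht,
      setIntegral_fiber_inter_comp μ hY (hX ht), setIntegral_fiber_inter_comp μ hY (hX ht),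
      hSP', hSN']
    ring
  have haffine : μ[S|MeasurableSpace.comap X inferInstance] =ᵐ[μ]
      fun ω => φ (μ[Y|MeasurableSpace.comap X inferInstance] ω) :=
    hcond.trans ((ContinuousLinearMap.mul ℝ ℝ (SP - SN)).comp_condExp_add_const_comm
      hX.comap_le hYint SN).symm
  exact ⟨haffine, fun hlt => ⟨φ, (strictMono_mul_left_of_pos (sub_pos.2 hlt)).add_const SN,
    fun _ => rfl, haffine⟩⟩

theorem condexp_soft_label_affine_in_posterior
    {Ω : Type*} [MeasurableSpace Ω] [StandardBorelSpace Ω] [Nonempty Ω]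
    (μ : Measure Ω) [IsProbabilityMeasure μ] {d : ℕ}
    (X : Ω → (Fin d → ℝ)) (Y S : Ω → ℝ)
    (hX : Measurable X) (hY : Measurable Y) (hS : Measurable S)
    (hYb : ∀ ω, Y ω = 0 ∨ Y ω = 1) (hS01 : ∀ ω, S ω ∈ Set.Icc (0:ℝ) 1)
    (hm : MeasurableSpace.comap Y inferInstance ≤ ‹MeasurableSpace Ω›)
    (hCI : CondIndepFun (MeasurableSpace.comap Y inferInstance) hm S X μ)
    (hπ : 0 < μ {ω | Y ω = 1}) (hπ1 : μ {ω | Y ω = 1} < 1)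
    (SP SN : ℝ)
    (hSP : SP = (∫ ω in {ω | Y ω = 1}, S ω ∂μ) / (μ {ω | Y ω = 1}).toReal)
    (hSN : SN = (∫ ω in {ω | Y ω = 0}, S ω ∂μ) / (μ {ω | Y ω = 0}).toReal) :
    (μ[S|MeasurableSpace.comap X inferInstance] =ᵐ[μ]
      fun ω => (SP - SN) * ((μ[Y|MeasurableSpace.comap X inferInstance]) ω) + SN) ∧
    (SN < SP → ∃ h : ℝ → ℝ, StrictMono h ∧ (∀ t, h t = (SP - SN) * t + SN) ∧
      μ[S|MeasurableSpace.comap X inferInstance] =ᵐ[μ]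
        fun ω => h ((μ[Y|MeasurableSpace.comap X inferInstance]) ω)) :=
  condexp_soft_label_affine_in_posterior_general μ X Y S hX hY hS hYb hS01 hm hCI SP SN hSP hSN
end

section
/- Let (X,Y) have joint law with η(x) = P(Y=1|X=x), density f for X, π = P(Y=1) > 0, and let η_S satisfy |η_S(x) − h(η(x))| ≤ ε for a differentiable strictly increasing h with h' ≥ C_h > 0. Assume the slice condition ∫_{η(x)∈[a,b]} f(x)dx ≤ M(b−a) for all 0<a<b<1. For thresholds T_Y and T_S with P(η(X) > T_Y) = P(η_S(X) > T_S), the classifiers Ŷ = 1{η(X)>T_Y} and Ŷ_S = 1{η_S(X)>T_S} satisfy TPR(Ŷ) − TPR(Ŷ_S) ≤ (4M/(πC_h²))·ε². -/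
open MeasureTheory Set

/-
Since η is the conditional expectation of Y given X, P(Ŷ = 1, Y = 1) = E[η(X); Ŷ = 1] for every
classifier Ŷ that is a function of X. With A = {η(X) > T_Y} and B = {η_S(X) > T_S}, the TPR
difference is therefore (E[η(X); A \ B] - E[η(X); B \ A]) / π, and matching thresholds give
P(A \ B) = P(B \ A). On A \ B we have η_S ≤ T_S and on B \ A we have η_S > T_S; as h grows at rate
at least C_h and η_S is ε-close to h ∘ η, η on A \ B exceeds η on B \ A by at most δ = 2ε / C_h.
So some level c has η ≥ c on B \ A and η ≤ c + δ on A \ B, and the difference of expectations is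
at most δ · P(A \ B). Finally A \ B lies in the slice {T_Y ≤ η(X) ≤ T_Y + δ}, of probability ≤ Mδ.
-/

theorem Convex.mul_sub_le_image_sub_of_le_derivWithin {D : Set ℝ} (hD : Convex ℝ D)
    {f : ℝ → ℝ} (hf : DifferentiableOn ℝ f D) {C : ℝ}
    (hf'_ge : ∀ x ∈ D, C ≤ derivWithin f D x) :
    ∀ᵉ (x ∈ D) (y ∈ D), x ≤ y → C * (y - x) ≤ f y - f x :=
  hD.mul_sub_le_image_sub_of_le_deriv hf.continuousOn (hf.mono interior_subset) fun x hx => by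
    rw [← derivWithin_of_mem_nhds (mem_interior_iff_mem_nhds.mp hx)]
    exact hf'_ge x (interior_subset hx)

theorem le_add_of_abs_sub_le_of_le_of_lt {h : ℝ → ℝ} {D : Set ℝ} {C ε T s s' u v : ℝ}
    (hC : 0 < C) (hgrowth : ∀ᵉ (x ∈ D) (y ∈ D), x ≤ y → C * (y - x) ≤ h y - h x)
    (hu : u ∈ D) (hv : v ∈ D) (hsu : |s - h u| ≤ ε) (hsv : |s' - h v| ≤ ε)
    (hs : s ≤ T) (hs' : T < s') :
    u ≤ v + 2 * ε / C := by
  have hε : 0 ≤ ε := (abs_nonneg _).trans hsu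
  rcases le_or_gt u v with huv | hvu
  · linarith [show 0 ≤ 2 * ε / C by positivity]
  · have hC_mul : C * (u - v) ≤ 2 * ε := by
      linarith [hgrowth v hv u hu hvu.le, abs_le.mp hsu, abs_le.mp hsv]
    have huv : u - v ≤ 2 * ε / C := by rw [le_div_iff₀ hC]; linarith
    linarith

theorem exists_forall_le_and_forall_le_add {α : Type*} {f : α → ℝ} {s t : Set α} {δ : ℝ}
    (hs : s.Nonempty) (ht : t.Nonempty) (hgap : ∀ x ∈ s, ∀ y ∈ t, f x ≤ f y + δ) :
    ∃ c, (∀ y ∈ t, c ≤ f y) ∧ ∀ x ∈ s, f x ≤ c + δ := by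
  obtain ⟨x₀, hx₀⟩ := hs
  have hbdd : BddBelow (f '' t) :=
    ⟨f x₀ - δ, by rintro _ ⟨y, hy, rfl⟩; linarith [hgap x₀ hx₀ y hy]⟩
  refine ⟨sInf (f '' t), fun y hy => csInf_le hbdd (mem_image_of_mem f hy), fun x hx => ?_⟩
  have : f x - δ ≤ sInf (f '' t) :=
    le_csInf (ht.image f) (by rintro _ ⟨y, hy, rfl⟩; linarith [hgap x hx y hy])
  linarith

section SetIntegral

variable {α : Type*} [MeasurableSpace α] {μ : Measure α} {f : α → ℝ} {s t : Set α}

theorem setIntegral_sub_setIntegral_eq_sdiff (hs : MeasurableSet s) (ht : MeasurableSet t)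
    (hfs : IntegrableOn f s μ) (hft : IntegrableOn f t μ) :
    ∫ x in s, f x ∂μ - ∫ x in t, f x ∂μ = ∫ x in s \ t, f x ∂μ - ∫ x in t \ s, f x ∂μ := by
  rw [← integral_inter_add_sdiff ht hfs, ← integral_inter_add_sdiff hs hft, inter_comm t s]
  ring

theorem setIntegral_sub_setIntegral_le_mul_measureReal [IsFiniteMeasure μ] {δ : ℝ}
    (hs : MeasurableSet s) (ht : MeasurableSet t) (hμ : μ s = μ t)
    (hfs : IntegrableOn f s μ) (hft : IntegrableOn f t μ)
    (hgap : ∀ x ∈ s, ∀ y ∈ t, f x ≤ f y + δ) :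
    ∫ x in s, f x ∂μ - ∫ x in t, f x ∂μ ≤ δ * μ.real s := by
  by_cases hs0 : μ s = 0
  · have ht0 : μ t = 0 := hμ ▸ hs0
    simp [Measure.restrict_eq_zero.mpr hs0, Measure.restrict_eq_zero.mpr ht0, measureReal_def,
      hs0]
  obtain ⟨c, hct, hsc⟩ := exists_forall_le_and_forall_le_add (nonempty_of_measure_ne_zero hs0)
    (nonempty_of_measure_ne_zero (hμ ▸ hs0)) hgap
  have hupper : ∫ x in s, f x ∂μ ≤ (c + δ) * μ.real s := by
    simpa [mul_comm] using
      setIntegral_mono_on hfs (integrable_const (c + δ)).integrableOn hs hsc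
  have hlower : c * μ.real t ≤ ∫ x in t, f x ∂μ := by
    simpa [mul_comm] using setIntegral_mono_on (integrable_const c).integrableOn hft ht hct
  have hreal : μ.real t = μ.real s := by simp only [measureReal_def, hμ]
  rw [hreal] at hlower
  linarith [add_mul c δ (μ.real s)]

theorem measureReal_le_of_forall_le_add {M T δ : ℝ} (hμ : μ s = μ t)
    (hs : ∀ x ∈ s, T < f x) (ht : ∀ y ∈ t, f y ≤ T) (hgap : ∀ x ∈ s, ∀ y ∈ t, f x ≤ f y + δ)
    (hMδ : 0 ≤ M * δ) (hslice : μ (f ⁻¹' Icc T (T + δ)) ≤ ENNReal.ofReal (M * δ)) :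
    μ.real s ≤ M * δ := by
  by_cases hs0 : μ s = 0
  · simpa [measureReal_def, hs0] using hMδ
  obtain ⟨y₀, hy₀⟩ := nonempty_of_measure_ne_zero (hμ ▸ hs0)
  have hsub : s ⊆ f ⁻¹' Icc T (T + δ) := fun x hx =>
    ⟨(hs x hx).le, by linarith [hgap x hx y₀ hy₀, ht y₀ hy₀]⟩
  exact ENNReal.toReal_le_of_le_ofReal hMδ ((measure_mono hsub).trans hslice)

end SetIntegral

theorem measureReal_inter_eq_setIntegral_of_condExp_ae_eq {Ω : Type*} {m : MeasurableSpace Ω}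
    [mΩ : MeasurableSpace Ω] {μ : Measure Ω} [IsFiniteMeasure μ] {Y g : Ω → ℝ} (hm : m ≤ mΩ)
    (hY : Measurable Y) (hYb : ∀ ω, Y ω = 0 ∨ Y ω = 1) (hcond : μ[Y|m] =ᵐ[μ] g)
    {s : Set Ω} (hs : MeasurableSet[m] s) :
    μ.real (s ∩ {ω | Y ω = 1}) = ∫ ω in s, g ω ∂μ := by
  set S := {ω | Y ω = 1}
  have hS : MeasurableSet S := hY (measurableSet_singleton 1)
  have hY_eq : ∀ ω, Y ω = S.indicator 1 ω := fun ω => by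
    rcases hYb ω with h | h <;> simp [S, h]
  have hYint : Integrable Y μ :=
    Integrable.of_mem_Icc 0 1 hY.aemeasurable (ae_of_all _ fun ω => by
      rcases hYb ω with h | h <;> simp [h])
  calc μ.real (s ∩ S) = ∫ ω in s, S.indicator 1 ω ∂μ := by
        rw [setIntegral_indicator hS]; simp
    _ = ∫ ω in s, Y ω ∂μ := by simp only [hY_eq]
    _ = ∫ ω in s, (μ[Y|m]) ω ∂μ := (setIntegral_condExp hm hYint hs).symm
    _ = ∫ ω in s, g ω ∂μ := setIntegral_congr_ae (hm s hs) (hcond.mono fun ω hω _ => hω)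

theorem measureReal_inter_sub_measureReal_inter_eq {Ω : Type*} {m : MeasurableSpace Ω}
    [mΩ : MeasurableSpace Ω] {μ : Measure Ω} [IsFiniteMeasure μ] {Y g : Ω → ℝ} (hm : m ≤ mΩ)
    (hY : Measurable Y) (hYb : ∀ ω, Y ω = 0 ∨ Y ω = 1) (hcond : μ[Y|m] =ᵐ[μ] g)
    {s t : Set Ω} (hs : MeasurableSet[m] s) (ht : MeasurableSet[m] t) (hg : Integrable g μ) :
    μ.real (s ∩ {ω | Y ω = 1}) - μ.real (t ∩ {ω | Y ω = 1})
      = ∫ ω in s \ t, g ω ∂μ - ∫ ω in t \ s, g ω ∂μ := by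
  rw [measureReal_inter_eq_setIntegral_of_condExp_ae_eq hm hY hYb hcond hs,
    measureReal_inter_eq_setIntegral_of_condExp_ae_eq hm hY hYb hcond ht,
    setIntegral_sub_setIntegral_eq_sdiff (hm s hs) (hm t ht) hg.integrableOn hg.integrableOn]

theorem tpr_deviation_bound_noisy_monotone_general
    {Ω : Type*} [MeasurableSpace Ω] (μ : Measure Ω) [IsProbabilityMeasure μ]
    {d : ℕ} (X : Ω → (Fin d → ℝ)) (Y : Ω → ℝ)
    (η ηS : (Fin d → ℝ) → ℝ) (h : ℝ → ℝ) (Ch ε M : ℝ)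
    (hX : Measurable X) (hY : Measurable Y) (hη : Measurable η) (hηS : Measurable ηS)
    (hYb : ∀ ω, Y ω = 0 ∨ Y ω = 1)
    (hη01 : ∀ x, η x ∈ Set.Icc (0:ℝ) 1)
    (hcond : μ[Y|MeasurableSpace.comap X inferInstance] =ᵐ[μ] fun ω => η (X ω))
    (π : ℝ) (hπdef : π = (μ {ω | Y ω = 1}).toReal)
    (hCh : 0 < Ch) (hε : 0 < ε) (hM : 0 < M)
    (hdiff : DifferentiableOn ℝ h (Set.Icc (0:ℝ) 1))
    (hderiv : ∀ t ∈ Set.Icc (0:ℝ) 1, Ch ≤ derivWithin h (Set.Icc (0:ℝ) 1) t)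
    (hnoise : ∀ x, |ηS x - h (η x)| ≤ ε)
    (hslice : ∀ a b : ℝ, 0 < a → a < b → b < 1 →
      μ {ω | η (X ω) ∈ Set.Icc a b} ≤ ENNReal.ofReal (M * (b - a)))
    (TY TS : ℝ) (hTY0 : 0 < TY) (hTY1 : TY + 2 * ε / Ch < 1)
    (hmatch : μ {ω | TY < η (X ω)} = μ {ω | TS < ηS (X ω)}) :
    (μ ({ω | TY < η (X ω)} ∩ {ω | Y ω = 1})).toReal / π -
      (μ ({ω | TS < ηS (X ω)} ∩ {ω | Y ω = 1})).toReal / π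
      ≤ (4 * M / (π * Ch ^ 2)) * ε ^ 2 := by
  set g : Ω → ℝ := fun ω => η (X ω)
  set A := {ω | TY < η (X ω)}
  set B := {ω | TS < ηS (X ω)}
  set δ := 2 * ε / Ch with hδ
  have hδ0 : 0 < δ := by positivity
  have hA : MeasurableSet[MeasurableSpace.comap X inferInstance] A :=
    ⟨_, measurableSet_lt measurable_const hη, rfl⟩
  have hB : MeasurableSet[MeasurableSpace.comap X inferInstance] B :=
    ⟨_, measurableSet_lt measurable_const hηS, rfl⟩
  have hg : Integrable g μ :=
    Integrable.of_mem_Icc 0 1 (hη.comp hX).aemeasurable (ae_of_all _ fun ω => hη01 (X ω))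
  have hgap : ∀ ω ∈ A \ B, ∀ ω' ∈ B \ A, g ω ≤ g ω' + δ := fun ω hω ω' hω' =>
    le_add_of_abs_sub_le_of_le_of_lt hCh
      ((convex_Icc 0 1).mul_sub_le_image_sub_of_le_derivWithin hdiff hderiv)
      (hη01 _) (hη01 _) (hnoise _) (hnoise _) (not_lt.mp hω.2) hω'.1
  have hAB : μ (A \ B) = μ (B \ A) := measure_sdiff_symm
    (hX.comap_le A hA).nullMeasurableSet (hX.comap_le B hB).nullMeasurableSet hmatch
    (measure_ne_top _ _)
  have hμAB : μ.real (A \ B) ≤ M * δ := by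
    refine measureReal_le_of_forall_le_add hAB (fun ω hω => hω.1) (fun ω hω => not_lt.mp hω.2)
      hgap (by positivity) ?_
    have hsliceδ := hslice TY (TY + δ) hTY0 (by linarith) hTY1
    rwa [add_sub_cancel_left] at hsliceδ
  have hπ : 0 ≤ π := hπdef ▸ ENNReal.toReal_nonneg
  calc _ = (∫ ω in A \ B, g ω ∂μ - ∫ ω in B \ A, g ω ∂μ) / π := by
        rw [div_sub_div_same, ← measureReal_def, ← measureReal_def,
          measureReal_inter_sub_measureReal_inter_eq hX.comap_le hY hYb hcond hA hB hg]
    _ ≤ δ * μ.real (A \ B) / π := by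
        gcongr
        exact setIntegral_sub_setIntegral_le_mul_measureReal
          ((hX.comap_le A hA).diff (hX.comap_le B hB)) ((hX.comap_le B hB).diff (hX.comap_le A hA))
          hAB hg.integrableOn hg.integrableOn hgap
    _ ≤ δ * (M * δ) / π := by gcongr
    _ = (4 * M / (π * Ch ^ 2)) * ε ^ 2 := by rw [hδ]; ring

theorem tpr_deviation_bound_noisy_monotone
    {Ω : Type*} [MeasurableSpace Ω] (μ : Measure Ω) [IsProbabilityMeasure μ]
    {d : ℕ} (X : Ω → (Fin d → ℝ)) (Y : Ω → ℝ)
    (η ηS : (Fin d → ℝ) → ℝ) (h : ℝ → ℝ) (Ch ε M : ℝ)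
    (hX : Measurable X) (hY : Measurable Y) (hη : Measurable η) (hηS : Measurable ηS)
    (hYb : ∀ ω, Y ω = 0 ∨ Y ω = 1)
    (hη01 : ∀ x, η x ∈ Set.Icc (0:ℝ) 1) (hηS01 : ∀ x, ηS x ∈ Set.Icc (0:ℝ) 1)
    (hcond : μ[Y|MeasurableSpace.comap X inferInstance] =ᵐ[μ] fun ω => η (X ω))
    (π : ℝ) (hπdef : π = (μ {ω | Y ω = 1}).toReal) (hπ0 : 0 < π) (hπ1 : π < 1)
    (hCh : 0 < Ch) (hε : 0 < ε) (hM : 0 < M)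
    (hdiff : DifferentiableOn ℝ h (Set.Icc (0:ℝ) 1))
    (hderiv : ∀ t ∈ Set.Icc (0:ℝ) 1, Ch ≤ derivWithin h (Set.Icc (0:ℝ) 1) t)
    (hmono : StrictMonoOn h (Set.Icc (0:ℝ) 1))
    (hnoise : ∀ x, |ηS x - h (η x)| ≤ ε)
    (hslice : ∀ a b : ℝ, 0 < a → a < b → b < 1 →
      μ {ω | η (X ω) ∈ Set.Icc a b} ≤ ENNReal.ofReal (M * (b - a)))
    (TY TS : ℝ) (hTY0 : 0 < TY) (hTY1 : TY + 2 * ε / Ch < 1)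
    (hmatch : μ {ω | TY < η (X ω)} = μ {ω | TS < ηS (X ω)}) :
    (μ ({ω | TY < η (X ω)} ∩ {ω | Y ω = 1})).toReal / π -
      (μ ({ω | TS < ηS (X ω)} ∩ {ω | Y ω = 1})).toReal / π
      ≤ (4 * M / (π * Ch ^ 2)) * ε ^ 2 :=
  tpr_deviation_bound_noisy_monotone_general μ X Y η ηS h Ch ε M hX hY hη hηS hYb hη01 hcond π hπdef
    hCh hε hM hdiff hderiv hnoise hslice TY TS hTY0 hTY1 hmatch
end

section
/- Let S ∈ [0,1] be a random variable with continuous cdf F_S and 0 < E[S] < 1, and for t ∈ [0,1] define G(t) = E[S·1{S > F_S^{-1}(1−t)}] (the largest possible value of E[S·Ŷ] over classifiers with P(Ŷ=1) = t). Then ∫₀¹ G(t) dt = 1/2 − (1/2)∫₀¹ F_S(u)² du. -/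
/-!
By the layer-cake formula, `E[S·1{S > c}] = ∫₀¹ P(S > max u c) du = ∫₀¹ min (1 - F_S u) (P(S > c)) du`,
and at the quantile threshold `c = Q (1 - t)` the capture probability `P(S > c)` is `t`.
Exchanging the order of integration and using `∫₀¹ min a t dt = a - a² / 2` with `a = 1 - F_S u`
leaves `∫₀¹ (1 - F_S(u)²) / 2 du`.
-/

open MeasureTheory Set

theorem integral_min_zero_one {a : ℝ} (ha : a ∈ Icc (0 : ℝ) 1) :
    ∫ t in (0 : ℝ)..1, min a t = a - a ^ 2 / 2 := by
  have hcont : Continuous fun t : ℝ => min a t := continuous_const.min continuous_id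
  rw [← intervalIntegral.integral_add_adjacent_intervals (hcont.intervalIntegrable 0 a)
    (hcont.intervalIntegrable a 1)]
  have h_below : ∫ t in (0 : ℝ)..a, min a t = ∫ t in (0 : ℝ)..a, t :=
    intervalIntegral.integral_congr fun t ht => by
      rw [uIcc_of_le ha.1] at ht; exact min_eq_right ht.2
  have h_above : ∫ t in a..1, min a t = ∫ _ in a..1, a :=
    intervalIntegral.integral_congr fun t ht => by
      rw [uIcc_of_le ha.2] at ht; exact min_eq_left ht.1
  rw [h_below, h_above, integral_id, intervalIntegral.integral_const, smul_eq_mul]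
  ring

theorem intervalIntegral_intervalIntegral_min_eq {g : ℝ → ℝ} (hg : Measurable g)
    (hg01 : ∀ u, g u ∈ Icc (0 : ℝ) 1) :
    ∫ t in (0 : ℝ)..1, ∫ u in (0 : ℝ)..1, min (g u) t = ∫ u in (0 : ℝ)..1, (g u - g u ^ 2 / 2) := by
  have hint : Integrable (Function.uncurry fun t u => min (g u) t)
      ((volume.restrict (Ioc (0 : ℝ) 1)).prod (volume.restrict (Ioc (0 : ℝ) 1))) := by
    rw [Measure.prod_restrict]
    refine Measure.integrableOn_of_bounded (M := 1) (by simp)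
      (hg.comp measurable_snd |>.min measurable_fst).aestronglyMeasurable ?_
    refine ae_restrict_of_forall_mem (measurableSet_Ioc.prod measurableSet_Ioc) fun p hp => ?_
    obtain ⟨hg0, hg1⟩ := hg01 p.2
    rw [Function.uncurry_def, Real.norm_of_nonneg (le_min hg0 hp.1.1.le)]
    exact (min_le_left _ _).trans hg1
  simp_rw [intervalIntegral.integral_of_le zero_le_one]
  rw [integral_integral_swap hint]
  refine setIntegral_congr_fun measurableSet_Ioc fun u _ => ?_
  rw [← intervalIntegral.integral_of_le zero_le_one, integral_min_zero_one (hg01 u)]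

section Tail

variable {Ω : Type*} [MeasurableSpace Ω] {μ : Measure Ω} {S : Ω → ℝ}

theorem antitone_measureReal_lt [IsFiniteMeasure μ] :
    Antitone fun u => μ.real {ω | u < S ω} :=
  fun _ _ huv => measureReal_mono fun _ hω => lt_of_le_of_lt huv hω

theorem integral_indicator_lt_eq_intervalIntegral_min [IsFiniteMeasure μ] (hS : Measurable S)
    (hS01 : ∀ ω, S ω ∈ Icc (0 : ℝ) 1) (c : ℝ) :
    ∫ ω, {ω | c < S ω}.indicator S ω ∂μ
      = ∫ u in (0 : ℝ)..1, min (μ.real {ω | u < S ω}) (μ.real {ω | c < S ω}) := by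
  have hSint : Integrable S μ :=
    .of_bound hS.aestronglyMeasurable 1 (ae_of_all _ fun ω => by
      rw [Real.norm_of_nonneg (hS01 ω).1]; exact (hS01 ω).2)
  have hlevel : ∀ u > 0, {ω | u < {ω | c < S ω}.indicator S ω} = {ω | max u c < S ω} := by
    intro u hu
    ext ω
    by_cases h : c < S ω
    · simp [h]
    · simp [h, hu.le]
  rw [(hSint.indicator (measurableSet_lt measurable_const hS)).integral_eq_integral_meas_lt
      (ae_of_all _ (indicator_nonneg fun ω _ => (hS01 ω).1)),
    setIntegral_congr_fun measurableSet_Ioi fun u hu => by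
      rw [hlevel u hu, antitone_measureReal_lt.map_max],
    intervalIntegral.integral_of_le zero_le_one]
  refine setIntegral_eq_of_subset_of_forall_sdiff_eq_zero measurableSet_Ioi Ioc_subset_Ioi_self
    fun u hu => ?_
  have hempty : {ω | u < S ω} = ∅ :=
    eq_empty_of_forall_notMem fun ω hω =>
      hu.2 ⟨hu.1, (lt_of_lt_of_le hω (hS01 ω).2).le⟩
  simp [hempty, measureReal_nonneg]

end Tail

theorem integral_of_optimal_soft_capture_general
    {Ω : Type*} [MeasurableSpace Ω] (μ : Measure Ω) [IsProbabilityMeasure μ]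
    (S : Ω → ℝ) (hS : Measurable S) (hS01 : ∀ ω, S ω ∈ Set.Icc (0:ℝ) 1)
    (Q : ℝ → ℝ)
    (hQ : ∀ t ∈ Set.Icc (0:ℝ) 1, μ {ω | Q (1 - t) < S ω} = ENNReal.ofReal t) :
    ∫ t in (0:ℝ)..1, (∫ ω, S ω * (if Q (1 - t) < S ω then (1:ℝ) else 0) ∂μ)
      = 1 / 2 - (1 / 2) * ∫ u in (0:ℝ)..1, ((μ {ω | S ω ≤ u}).toReal) ^ 2 := by
  set F : ℝ → ℝ := fun u => (μ {ω | S ω ≤ u}).toReal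
  set G : ℝ → ℝ := fun u => μ.real {ω | u < S ω}
  have hGF : ∀ u, G u = 1 - F u := fun u => by
    rw [show F u = μ.real {ω | S ω ≤ u} from rfl,
      ← probReal_compl_eq_one_sub (measurableSet_le hS measurable_const)]
    simp [G, compl_ofPred]
  have hcapture : ∀ t ∈ Icc (0 : ℝ) 1,
      ∫ ω, S ω * (if Q (1 - t) < S ω then (1 : ℝ) else 0) ∂μ = ∫ u in (0 : ℝ)..1, min (G u) t := by
    intro t ht
    have hmass : μ.real {ω | Q (1 - t) < S ω} = t := by
      rw [measureReal_def, hQ t ht, ENNReal.toReal_ofReal ht.1]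
    calc _ = ∫ ω, {ω | Q (1 - t) < S ω}.indicator S ω ∂μ := by
          simp_rw [mul_ite, mul_one, mul_zero, indicator_apply, mem_ofPred_eq]
      _ = _ := by rw [integral_indicator_lt_eq_intervalIntegral_min hS hS01, hmass]
  have hF2 : Monotone fun u => F u ^ 2 := fun u v huv =>
    pow_le_pow_left₀ ENNReal.toReal_nonneg
      (ENNReal.toReal_mono (measure_ne_top μ _) (measure_mono fun ω hω => le_trans hω huv)) 2
  calc _ = ∫ t in (0 : ℝ)..1, ∫ u in (0 : ℝ)..1, min (G u) t :=
        intervalIntegral.integral_congr fun t ht =>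
          hcapture t (by rwa [uIcc_of_le zero_le_one] at ht)
    _ = ∫ u in (0 : ℝ)..1, (1 / 2 - 1 / 2 * F u ^ 2) := by
        rw [intervalIntegral_intervalIntegral_min_eq antitone_measureReal_lt.measurable
          fun u => ⟨measureReal_nonneg, measureReal_le_one⟩]
        refine intervalIntegral.integral_congr fun u _ => ?_
        change G u - G u ^ 2 / 2 = _
        rw [hGF]
        ring
    _ = _ := by
        rw [intervalIntegral.integral_sub intervalIntegrable_const
          (hF2.intervalIntegrable.const_mul _), intervalIntegral.integral_const_mul,
          intervalIntegral.integral_const, sub_zero, one_smul]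

theorem integral_of_optimal_soft_capture
    {Ω : Type*} [MeasurableSpace Ω] (μ : Measure Ω) [IsProbabilityMeasure μ]
    (S : Ω → ℝ) (hS : Measurable S) (hS01 : ∀ ω, S ω ∈ Set.Icc (0:ℝ) 1)
    (hES0 : 0 < ∫ ω, S ω ∂μ) (hES1 : (∫ ω, S ω ∂μ) < 1)
    (hcont : Continuous fun u : ℝ => (μ {ω | S ω ≤ u}).toReal)
    (Q : ℝ → ℝ)
    (hQ : ∀ t ∈ Set.Icc (0:ℝ) 1, μ {ω | Q (1 - t) < S ω} = ENNReal.ofReal t) :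
    ∫ t in (0:ℝ)..1, (∫ ω, S ω * (if Q (1 - t) < S ω then (1:ℝ) else 0) ∂μ)
      = 1 / 2 - (1 / 2) * ∫ u in (0:ℝ)..1, ((μ {ω | S ω ≤ u}).toReal) ^ 2 :=
  integral_of_optimal_soft_capture_general μ S hS hS01 Q hQ
end

section
/- Let S ∈ [0,1] have continuous cdf F_S with 0 < E[S] < 1. Then for any family of classifiers parametrized so that ROC_SPU is well defined (TPR_SPU = E[S·Ŷ]/E[S], FPR_SPU = E[(1−S)·Ŷ]/E[1−S], AUC_SPU = ∫ TPR_SPU d(FPR_SPU)), one has AUC_SPU ≤ 1/2 + (∫₀¹ F_S(u)(1−F_S(u))du) / (2·∫₀¹ F_S(u)du·∫₀¹(1−F_S(u))du). -/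
/-!
Write `p = E[S]`, `G` for the cdf of `S` and `F` for `FPR_SPU`. Since `P(Ŷ_t = 1) = t`, the rates
satisfy `p · TPR + (1 - p) · FPR = t`, so integrating by parts gives
`p · AUC = 1 - ∫ F - (1 - p) / 2`, while `∫ G = 1 - p` and `∫ (1 - G) = p`. The claim thus reduces
to `∫₀¹ G² ≤ 2 (1 - p) ∫₀¹ F`. By symmetrising over two independent copies of `S`,
`G(u)² ≤ 2 E[G(S); S ≤ u]`, and Fubini turns the right-hand side into `2 E[G(S) (1 - S)]`.
By Fubini again, `E[(1 - S) G(S)] = ∫₀¹ E[1 - S; G(S) > 1 - t] dt`, and by the Neyman–Pearson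
(bathtub) argument, thresholding `S` at the level `c` with `G(c) = 1 - t` (continuity of `G`)
minimises `E[(1 - S) Ŷ]` among classifiers with `P(Ŷ = 1) = t`, whence
`E[1 - S; G(S) > 1 - t] ≤ (1 - p) F(t)`.
-/

open MeasureTheory Set

section RealAnalysis

variable {F : ℝ → ℝ} {a b : ℝ}

lemma integral_mul_deriv_self (hF : Differentiable ℝ F)
    (hF' : IntervalIntegrable (deriv F) volume a b) :
    ∫ x in a..b, F x * deriv F x = F b ^ 2 / 2 - F a ^ 2 / 2 := by
  have hderiv : ∀ x ∈ uIcc a b, HasDerivAt (fun y ↦ F y ^ 2 / 2) (F x * deriv F x) x := by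
    intro x _
    have h := ((hF x).hasDerivAt.fun_pow 2).div_const 2
    rwa [show ((2:ℕ):ℝ) * F x ^ (2 - 1) * deriv F x / 2 = F x * deriv F x by norm_num; ring] at h
  exact intervalIntegral.integral_eq_sub_of_hasDerivAt hderiv
    (hF'.continuousOn_mul hF.continuous.continuousOn)

lemma integral_id_mul_deriv (hF : Differentiable ℝ F)
    (hF' : IntervalIntegrable (deriv F) volume a b) :
    ∫ x in a..b, x * deriv F x = b * F b - a * F a - ∫ x in a..b, F x := by
  simpa using intervalIntegral.integral_mul_deriv_eq_deriv_mul (fun x _ ↦ hasDerivAt_id x)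
    (fun x _ ↦ (hF x).hasDerivAt) intervalIntegrable_const hF'

lemma mul_integral_mul_deriv_eq {T : ℝ → ℝ} {p : ℝ} (hp : p ≠ 0)
    (hrel : ∀ t ∈ Icc (0:ℝ) 1, p * T t + (1 - p) * F t = t)
    (hF0 : F 0 = 0) (hF1 : F 1 = 1) (hF : Differentiable ℝ F)
    (hmono : MonotoneOn F (Icc 0 1)) :
    p * ∫ t in (0:ℝ)..1, T t * deriv F t = 1 - (∫ t in (0:ℝ)..1, F t) - (1 - p) / 2 := by
  have hF' : IntervalIntegrable (deriv F) volume 0 1 :=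
    MonotoneOn.intervalIntegrable_deriv (by rwa [uIcc_of_le zero_le_one])
  have hT : EqOn (fun t ↦ T t * deriv F t)
      (fun t ↦ p⁻¹ * (t * deriv F t) - p⁻¹ * (1 - p) * (F t * deriv F t)) (uIcc 0 1) := by
    intro t ht
    rw [uIcc_of_le zero_le_one] at ht
    field_simp
    linear_combination deriv F t * hrel t ht
  rw [intervalIntegral.integral_congr hT, intervalIntegral.integral_sub
    ((hF'.continuousOn_mul (g := fun x ↦ x) continuousOn_id).const_mul _)
    ((hF'.continuousOn_mul hF.continuous.continuousOn).const_mul _),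
    intervalIntegral.integral_const_mul, intervalIntegral.integral_const_mul,
    integral_id_mul_deriv hF hF', integral_mul_deriv_self hF hF', hF0, hF1]
  field_simp
  ring

lemma intervalIntegral_mono_of_nonneg {f g : ℝ → ℝ} (hab : a ≤ b)
    (hf : ∀ x ∈ Ioc a b, 0 ≤ f x) (hfg : ∀ x ∈ Ioc a b, f x ≤ g x)
    (hg : IntervalIntegrable g volume a b) : ∫ x in a..b, f x ≤ ∫ x in a..b, g x := by
  rw [intervalIntegral.integral_of_le hab, intervalIntegral.integral_of_le hab]
  exact setIntegral_mono_of_nonneg hf hfg hg.1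

lemma intervalIntegral_indicator_Ioi {x : ℝ} (hx : x ∈ Icc (0:ℝ) 1) :
    ∫ t in (0:ℝ)..1, (Ioi x).indicator 1 t = 1 - x := by
  rw [intervalIntegral.integral_of_le zero_le_one, integral_indicator_one measurableSet_Ioi,
    measureReal_restrict_apply measurableSet_Ioi, inter_comm, Ioc_inter_Ioi, max_eq_right hx.1,
    Real.volume_real_Ioc_of_le hx.2]

lemma intervalIntegral_indicator_Ici {x : ℝ} (hx : x ∈ Icc (0:ℝ) 1) :
    ∫ t in (0:ℝ)..1, (Ici x).indicator 1 t = 1 - x := by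
  rw [← intervalIntegral_indicator_Ioi hx]
  refine intervalIntegral.integral_congr_ae ?_
  filter_upwards [indicator_ae_eq_of_ae_eq_set (f := (1 : ℝ → ℝ)) Ioi_ae_eq_Ici] with t ht _
  exact ht.symm

end RealAnalysis

lemma le_one_half_add_div_of_mul_eq {A I J p : ℝ} (hp0 : 0 < p) (hp1 : p < 1)
    (hA : p * A = 1 - I - (1 - p) / 2) (hJ : J ≤ 2 * (1 - p) * I) :
    A ≤ 1 / 2 + (1 - p - J) / (2 * (1 - p) * p) := by
  have hq : 0 < 1 - p := by linarith
  have h : 1 / 2 + (1 - p - J) / (2 * (1 - p) * p) - A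
      = (2 * (1 - p) * I - J) / (2 * (1 - p) * p) := by
    field_simp
    linear_combination -2 * (1 - p) * hA
  rw [← sub_nonneg, h]
  exact div_nonneg (by linarith) (by positivity)

section FiniteMeasure

variable {Ω : Type*} [MeasurableSpace Ω] {μ : Measure Ω} {X Y : Ω → ℝ}

lemma measurable_measure_setOf_le_comp (hX : Measurable X) :
    Measurable fun ω ↦ μ {ω' | X ω' ≤ X ω} :=
  (Monotone.measurable (f := fun v ↦ μ {ω' | X ω' ≤ v})
    fun _ _ h ↦ measure_mono fun _ h' ↦ le_trans h' h).comp hX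

variable [IsFiniteMeasure μ]

lemma monotone_measureReal_le : Monotone fun u ↦ μ.real {ω | X ω ≤ u} :=
  fun _ _ huv ↦ measureReal_mono fun _ h ↦ le_trans h huv

lemma integrable_of_forall_mem_Icc (hX : Measurable X) (hX01 : ∀ ω, X ω ∈ Icc (0:ℝ) 1) :
    Integrable X μ :=
  .of_bound hX.aestronglyMeasurable 1 (ae_of_all _ fun ω ↦ by
    rw [Real.norm_eq_abs, abs_of_nonneg (hX01 ω).1]; exact (hX01 ω).2)

lemma integrable_mul_of_forall_mem_Icc (hX : Measurable X) (hX01 : ∀ ω, X ω ∈ Icc (0:ℝ) 1)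
    (hY : Measurable Y) (hY01 : ∀ ω, Y ω ∈ Icc (0:ℝ) 1) : Integrable (fun ω ↦ X ω * Y ω) μ :=
  integrable_of_forall_mem_Icc (hX.mul hY) fun ω ↦ unitInterval.mul_mem (hX01 ω) (hY01 ω)

/-- Symmetrisation: `{X ≤ u}²` is covered by `{X' ≤ X ≤ u}` and its mirror image. -/
lemma measure_le_sq_le_two_mul_setLIntegral (hX : Measurable X) (u : ℝ) :
    μ {ω | X ω ≤ u} ^ 2 ≤ 2 * ∫⁻ ω in {ω | X ω ≤ u}, μ {ω' | X ω' ≤ X ω} ∂μ := by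
  set D : Set (Ω × Ω) := {q | X q.2 ≤ X q.1 ∧ X q.1 ≤ u}
  have hD : MeasurableSet D :=
    (measurableSet_le (hX.comp measurable_snd) (hX.comp measurable_fst)).inter
      (measurableSet_le (hX.comp measurable_fst) measurable_const)
  have hprod : μ.prod μ D = ∫⁻ ω in {ω | X ω ≤ u}, μ {ω' | X ω' ≤ X ω} ∂μ := by
    have hA : MeasurableSet {ω | X ω ≤ u} := hX measurableSet_Iic
    rw [Measure.prod_apply hD, ← lintegral_indicator hA]
    congr 1 with ω
    by_cases h : X ω ≤ u <;> simp [D, h]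
  have hswap : μ.prod μ (Prod.swap ⁻¹' D) = μ.prod μ D := by
    rw [← Measure.map_apply measurable_swap hD, Measure.prod_swap]
  have hcover : {ω | X ω ≤ u} ×ˢ {ω | X ω ≤ u} ⊆ D ∪ Prod.swap ⁻¹' D := by
    rintro ⟨a, b⟩ ⟨ha, hb⟩
    rcases le_total (X b) (X a) with h | h
    exacts [Or.inl ⟨h, ha⟩, Or.inr ⟨h, hb⟩]
  calc μ {ω | X ω ≤ u} ^ 2 = μ.prod μ ({ω | X ω ≤ u} ×ˢ {ω | X ω ≤ u}) := by
        rw [Measure.prod_prod, sq]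
    _ ≤ μ.prod μ D + μ.prod μ (Prod.swap ⁻¹' D) :=
        (measure_mono hcover).trans (measure_union_le _ _)
    _ = 2 * ∫⁻ ω in {ω | X ω ≤ u}, μ {ω' | X ω' ≤ X ω} ∂μ := by rw [hswap, hprod, two_mul]

lemma sq_measureReal_le_le_two_mul_setIntegral (hX : Measurable X) (u : ℝ) :
    μ.real {ω | X ω ≤ u} ^ 2 ≤ 2 * ∫ ω in {ω | X ω ≤ u}, μ.real {ω' | X ω' ≤ X ω} ∂μ := by
  have hfin : ∫⁻ ω in {ω | X ω ≤ u}, μ {ω' | X ω' ≤ X ω} ∂μ ≠ ⊤ :=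
    ne_top_of_le_ne_top (by
      rw [setLIntegral_const]; exact ENNReal.mul_ne_top (measure_ne_top _ _) (measure_ne_top _ _))
      (lintegral_mono fun _ ↦ measure_mono (subset_univ _))
  simp only [measureReal_def]
  rw [integral_toReal (measurable_measure_setOf_le_comp hX).aemeasurable
      (ae_of_all _ fun _ ↦ measure_lt_top _ _),
    ← ENNReal.toReal_pow, ← ENNReal.toReal_ofNat, ← ENNReal.toReal_mul]
  exact ENNReal.toReal_mono (ENNReal.mul_ne_top ENNReal.ofNat_ne_top hfin)
    (measure_le_sq_le_two_mul_setLIntegral hX u)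

/-- Bathtub principle: `f 1_A + a (Y - 1_A) ≤ f Y` pointwise. -/
lemma setIntegral_le_integral_mul_of_measureReal_le {f : Ω → ℝ} {A : Set Ω} {a : ℝ}
    (hA : MeasurableSet A) (hf : Integrable f μ) (hY : Measurable Y)
    (hY01 : ∀ ω, Y ω ∈ Icc (0:ℝ) 1) (ha : 0 ≤ a) (hfA : ∀ ω ∈ A, f ω ≤ a)
    (hfAc : ∀ ω ∉ A, a ≤ f ω) (hμA : μ.real A ≤ ∫ ω, Y ω ∂μ) :
    ∫ ω in A, f ω ∂μ ≤ ∫ ω, f ω * Y ω ∂μ := by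
  have hYi : Integrable Y μ := integrable_of_forall_mem_Icc hY hY01
  have hIi : Integrable (A.indicator (1 : Ω → ℝ)) μ := (integrable_const 1).indicator hA
  have hcorr : Integrable (fun ω ↦ a * (Y ω - A.indicator 1 ω)) μ := (hYi.sub hIi).const_mul a
  have hpt : ∀ ω, A.indicator f ω + a * (Y ω - A.indicator 1 ω) ≤ f ω * Y ω := by
    intro ω
    by_cases hω : ω ∈ A
    · simp only [indicator_of_mem hω, Pi.one_apply]
      linarith [mul_le_mul_of_nonneg_right (hfA ω hω) (sub_nonneg.2 (hY01 ω).2)]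
    · simp only [indicator_of_notMem hω]
      linarith [mul_le_mul_of_nonneg_right (hfAc ω hω) (hY01 ω).1]
  calc ∫ ω in A, f ω ∂μ ≤ ∫ ω in A, f ω ∂μ + a * (∫ ω, Y ω ∂μ - μ.real A) :=
        le_add_of_nonneg_right (mul_nonneg ha (sub_nonneg.2 hμA))
    _ = ∫ ω, A.indicator f ω + a * (Y ω - A.indicator 1 ω) ∂μ := by
        rw [integral_add (hf.indicator hA) hcorr, integral_const_mul,
          integral_sub hYi hIi, integral_indicator hA, integral_indicator_one hA]
    _ ≤ ∫ ω, f ω * Y ω ∂μ :=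
        integral_mono ((hf.indicator hA).add hcorr)
          (hf.mul_bdd hY.aestronglyMeasurable (ae_of_all _ fun ω ↦ by
            rw [Real.norm_eq_abs, abs_of_nonneg (hY01 ω).1]; exact (hY01 ω).2)) hpt

lemma intervalIntegral_setIntegral_eq_integral_mul {A : ℝ → Set Ω}
    (hA : MeasurableSet {q : ℝ × Ω | q.2 ∈ A q.1}) {w : Ω → ℝ} (hw : Measurable w) {C : ℝ}
    (hwC : ∀ ω, |w ω| ≤ C) :
    ∫ t in (0:ℝ)..1, ∫ ω in A t, w ω ∂μ
      = ∫ ω, w ω * (∫ t in (0:ℝ)..1, {t | ω ∈ A t}.indicator 1 t) ∂μ := by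
  have hint : Integrable (Function.uncurry fun t ω ↦ (A t).indicator w ω)
      ((volume.restrict (Ioc 0 1)).prod μ) :=
    .of_bound ((hw.comp measurable_snd).indicator hA).aestronglyMeasurable C
      (ae_of_all _ fun q ↦ (norm_indicator_le_norm_self w q.2).trans (hwC q.2))
  have hAt : ∀ t, MeasurableSet (A t) := fun t ↦ measurable_prodMk_left hA
  simp_rw [← integral_indicator (hAt _)]
  rw [intervalIntegral_integral_swap (by rwa [uIoc_of_le zero_le_one])]
  congr 1 with ω
  rw [← intervalIntegral.integral_const_mul]
  congr 1 with t
  by_cases h : ω ∈ A t <;> simp [h]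

lemma intervalIntegral_setIntegral_le_eq (hX : Measurable X) (hX01 : ∀ ω, X ω ∈ Icc (0:ℝ) 1)
    {w : Ω → ℝ} (hw : Measurable w) {C : ℝ} (hwC : ∀ ω, |w ω| ≤ C) :
    ∫ u in (0:ℝ)..1, ∫ ω in {ω | X ω ≤ u}, w ω ∂μ = ∫ ω, w ω * (1 - X ω) ∂μ := by
  rw [intervalIntegral_setIntegral_eq_integral_mul (A := fun u ↦ {ω | X ω ≤ u})
    (measurableSet_le (hX.comp measurable_snd) measurable_fst) hw hwC]
  congr 1 with ω
  rw [← intervalIntegral_indicator_Ici (hX01 ω)]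
  rfl

lemma intervalIntegral_setIntegral_one_sub_lt_eq (hX : Measurable X)
    (hX01 : ∀ ω, X ω ∈ Icc (0:ℝ) 1) {w : Ω → ℝ} (hw : Measurable w) {C : ℝ}
    (hwC : ∀ ω, |w ω| ≤ C) :
    ∫ t in (0:ℝ)..1, ∫ ω in {ω | 1 - t < X ω}, w ω ∂μ = ∫ ω, w ω * X ω ∂μ := by
  rw [intervalIntegral_setIntegral_eq_integral_mul (A := fun t ↦ {ω | 1 - t < X ω})
    (measurableSet_lt (measurable_const.sub measurable_fst) (hX.comp measurable_snd)) hw hwC]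
  congr 1 with ω
  have hset : {t : ℝ | ω ∈ {ω | 1 - t < X ω}} = Ioi (1 - X ω) := by ext t; simp [sub_lt_comm]
  rw [hset, intervalIntegral_indicator_Ioi (Icc.mem_iff_one_sub_mem.1 (hX01 ω)), sub_sub_cancel]

lemma intervalIntegral_sq_measureReal_le_le (hX : Measurable X)
    (hX01 : ∀ ω, X ω ∈ Icc (0:ℝ) 1) :
    ∫ u in (0:ℝ)..1, μ.real {ω | X ω ≤ u} ^ 2
      ≤ 2 * ∫ ω, μ.real {ω' | X ω' ≤ X ω} * (1 - X ω) ∂μ := by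
  have hG : Measurable fun ω ↦ μ.real {ω' | X ω' ≤ X ω} :=
    (measurable_measure_setOf_le_comp hX).ennreal_toReal
  have hGC : ∀ ω, |μ.real {ω' | X ω' ≤ X ω}| ≤ μ.real univ := fun ω ↦ by
    rw [abs_of_nonneg measureReal_nonneg]; exact measureReal_mono (subset_univ _)
  have hmono : Monotone fun u ↦ ∫ ω in {ω | X ω ≤ u}, μ.real {ω' | X ω' ≤ X ω} ∂μ :=
    fun u v huv ↦ setIntegral_mono_set
      (Integrable.of_bound hG.aestronglyMeasurable _ (ae_of_all _ hGC)).integrableOn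
      (ae_of_all _ fun _ ↦ measureReal_nonneg)
      (LE.le.eventuallyLE fun _ h ↦ le_trans h huv)
  calc ∫ u in (0:ℝ)..1, μ.real {ω | X ω ≤ u} ^ 2
      ≤ ∫ u in (0:ℝ)..1, 2 * ∫ ω in {ω | X ω ≤ u}, μ.real {ω' | X ω' ≤ X ω} ∂μ :=
        intervalIntegral_mono_of_nonneg zero_le_one (fun _ _ ↦ sq_nonneg _)
          (fun u _ ↦ sq_measureReal_le_le_two_mul_setIntegral hX u)
          (hmono.intervalIntegrable.const_mul 2)
    _ = 2 * ∫ ω, μ.real {ω' | X ω' ≤ X ω} * (1 - X ω) ∂μ := by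
        rw [intervalIntegral.integral_const_mul, intervalIntegral_setIntegral_le_eq hX hX01 hG hGC]

end FiniteMeasure

section ProbabilityMeasure

variable {Ω : Type*} [MeasurableSpace Ω] {μ : Measure Ω} [IsProbabilityMeasure μ]
  {S Y : Ω → ℝ}

noncomputable def tprSPU (μ : Measure Ω) (S Y : Ω → ℝ) : ℝ :=
  (∫ ω, S ω * Y ω ∂μ) / ∫ ω, S ω ∂μ

noncomputable def fprSPU (μ : Measure Ω) (S Y : Ω → ℝ) : ℝ :=
  (∫ ω, (1 - S ω) * Y ω ∂μ) / ∫ ω, (1 - S ω) ∂μ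

lemma integral_one_sub_eq (hS : Integrable S μ) : ∫ ω, (1 - S ω) ∂μ = 1 - ∫ ω, S ω ∂μ := by
  rw [integral_sub (integrable_const 1) hS, integral_const, probReal_univ, one_smul]

lemma integral_mul_add_integral_one_sub_mul (hS : Measurable S) (hS01 : ∀ ω, S ω ∈ Icc (0:ℝ) 1)
    (hY : Measurable Y) (hY01 : ∀ ω, Y ω ∈ Icc (0:ℝ) 1) :
    ∫ ω, S ω * Y ω ∂μ + ∫ ω, (1 - S ω) * Y ω ∂μ = ∫ ω, Y ω ∂μ := by
  rw [← integral_add (integrable_mul_of_forall_mem_Icc hS hS01 hY hY01)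
    (integrable_mul_of_forall_mem_Icc (X := fun ω ↦ 1 - S ω) (measurable_const.sub hS)
      (fun ω ↦ Icc.mem_iff_one_sub_mem.1 (hS01 ω)) hY hY01)]
  congr 1 with ω
  ring

lemma intervalIntegral_measureReal_le_eq (hS : Measurable S) (hS01 : ∀ ω, S ω ∈ Icc (0:ℝ) 1) :
    ∫ u in (0:ℝ)..1, μ.real {ω | S ω ≤ u} = 1 - ∫ ω, S ω ∂μ := by
  rw [← integral_one_sub_eq (integrable_of_forall_mem_Icc hS hS01)]
  simpa using intervalIntegral_setIntegral_le_eq (μ := μ) hS hS01 (w := 1) measurable_const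
    (C := 1) (by simp)

lemma intervalIntegral_one_sub_measureReal_le_eq (hS : Measurable S)
    (hS01 : ∀ ω, S ω ∈ Icc (0:ℝ) 1) :
    ∫ u in (0:ℝ)..1, (1 - μ.real {ω | S ω ≤ u}) = ∫ ω, S ω ∂μ := by
  rw [intervalIntegral.integral_sub intervalIntegrable_const
    monotone_measureReal_le.intervalIntegrable, intervalIntegral_measureReal_le_eq hS hS01]
  simp

lemma intervalIntegral_measureReal_le_mul_one_sub_eq (hS : Measurable S)
    (hS01 : ∀ ω, S ω ∈ Icc (0:ℝ) 1) :
    ∫ u in (0:ℝ)..1, μ.real {ω | S ω ≤ u} * (1 - μ.real {ω | S ω ≤ u})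
      = (1 - ∫ ω, S ω ∂μ) - ∫ u in (0:ℝ)..1, μ.real {ω | S ω ≤ u} ^ 2 := by
  have hsq : Monotone fun u ↦ μ.real {ω | S ω ≤ u} ^ 2 := fun _ _ huv ↦
    pow_le_pow_left₀ measureReal_nonneg (monotone_measureReal_le huv) 2
  rw [← intervalIntegral_measureReal_le_eq hS hS01, ← intervalIntegral.integral_sub
    monotone_measureReal_le.intervalIntegrable hsq.intervalIntegrable]
  congr 1 with u
  ring

lemma mul_fprSPU (hS : Integrable S μ) (hp1 : ∫ ω, S ω ∂μ < 1) :
    (1 - ∫ ω, S ω ∂μ) * fprSPU μ S Y = ∫ ω, (1 - S ω) * Y ω ∂μ := by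
  rw [fprSPU, integral_one_sub_eq hS, mul_div_cancel₀ _ (sub_ne_zero.2 hp1.ne')]

lemma mul_tprSPU_add_mul_fprSPU (hS : Measurable S) (hS01 : ∀ ω, S ω ∈ Icc (0:ℝ) 1)
    (hY : Measurable Y) (hY01 : ∀ ω, Y ω ∈ Icc (0:ℝ) 1) (hp0 : 0 < ∫ ω, S ω ∂μ)
    (hp1 : ∫ ω, S ω ∂μ < 1) :
    (∫ ω, S ω ∂μ) * tprSPU μ S Y + (1 - ∫ ω, S ω ∂μ) * fprSPU μ S Y = ∫ ω, Y ω ∂μ := by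
  rw [tprSPU, mul_div_cancel₀ _ hp0.ne', mul_fprSPU (integrable_of_forall_mem_Icc hS hS01) hp1,
    integral_mul_add_integral_one_sub_mul hS hS01 hY hY01]

lemma fprSPU_eq_zero (hS01 : ∀ ω, S ω ∈ Icc (0:ℝ) 1) (hY : Measurable Y)
    (hY01 : ∀ ω, Y ω ∈ Icc (0:ℝ) 1) (hY0 : ∫ ω, Y ω ∂μ = 0) : fprSPU μ S Y = 0 := by
  have hle : ∫ ω, (1 - S ω) * Y ω ∂μ ≤ ∫ ω, Y ω ∂μ :=
    integral_mono_of_nonneg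
      (ae_of_all _ fun ω ↦ mul_nonneg (sub_nonneg.2 (hS01 ω).2) (hY01 ω).1)
      (integrable_of_forall_mem_Icc hY hY01)
      (ae_of_all _ fun ω ↦ mul_le_of_le_one_left (hY01 ω).1 (by linarith [(hS01 ω).1]))
  have hge : 0 ≤ ∫ ω, (1 - S ω) * Y ω ∂μ :=
    integral_nonneg fun ω ↦ mul_nonneg (sub_nonneg.2 (hS01 ω).2) (hY01 ω).1
  rw [fprSPU, le_antisymm (hY0 ▸ hle) hge, zero_div]

lemma fprSPU_eq_one (hS : Measurable S) (hS01 : ∀ ω, S ω ∈ Icc (0:ℝ) 1)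
    (hY : Measurable Y) (hY01 : ∀ ω, Y ω ∈ Icc (0:ℝ) 1) (hp1 : ∫ ω, S ω ∂μ < 1)
    (hY1 : ∫ ω, Y ω ∂μ = 1) : fprSPU μ S Y = 1 := by
  have h1S : ∀ ω, 1 - S ω ∈ Icc (0:ℝ) 1 := fun ω ↦ Icc.mem_iff_one_sub_mem.1 (hS01 ω)
  have hSi : Integrable S μ := integrable_of_forall_mem_Icc hS hS01
  have hSY : ∫ ω, S ω * Y ω ∂μ ≤ ∫ ω, S ω ∂μ :=
    integral_mono (integrable_mul_of_forall_mem_Icc hS hS01 hY hY01) hSi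
      fun ω ↦ mul_le_of_le_one_right (hS01 ω).1 (hY01 ω).2
  have hSY' : ∫ ω, (1 - S ω) * Y ω ∂μ ≤ ∫ ω, (1 - S ω) ∂μ :=
    integral_mono
      (integrable_mul_of_forall_mem_Icc (X := fun ω ↦ 1 - S ω) (measurable_const.sub hS) h1S
        hY hY01)
      (integrable_of_forall_mem_Icc (X := fun ω ↦ 1 - S ω) (measurable_const.sub hS) h1S)
      fun ω ↦ mul_le_of_le_one_right (h1S ω).1 (hY01 ω).2
  have hsum := integral_mul_add_integral_one_sub_mul (μ := μ) hS hS01 hY hY01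
  rw [integral_one_sub_eq hSi] at hSY'
  rw [fprSPU, integral_one_sub_eq hSi, div_eq_one_iff_eq (sub_ne_zero.2 hp1.ne')]
  linarith

lemma setIntegral_one_sub_le_integral_one_sub_mul (hS : Measurable S)
    (hS01 : ∀ ω, S ω ∈ Icc (0:ℝ) 1) (hcont : Continuous fun u ↦ μ.real {ω | S ω ≤ u})
    (hY : Measurable Y) (hY01 : ∀ ω, Y ω ∈ Icc (0:ℝ) 1) {t : ℝ} (ht : t ∈ Icc (0:ℝ) 1)
    (hYt : ∫ ω, Y ω ∂μ = t) :
    ∫ ω in {ω | 1 - t < μ.real {ω' | S ω' ≤ S ω}}, (1 - S ω) ∂μ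
      ≤ ∫ ω, (1 - S ω) * Y ω ∂μ := by
  set G : ℝ → ℝ := fun u ↦ μ.real {ω | S ω ≤ u}
  have hG : Monotone G := monotone_measureReal_le
  have hG0 : G (-1) = 0 := by
    have : {ω | S ω ≤ -1} = ∅ := eq_empty_of_forall_notMem fun ω h ↦ by
      linarith [(hS01 ω).1, show S ω ≤ -1 from h]
    simp [G, this]
  have hG1 : G 1 = 1 := by
    have : {ω | S ω ≤ 1} = univ := eq_univ_of_forall fun ω ↦ (hS01 ω).2
    simp [G, this]
  obtain ⟨c, hc, hGc⟩ : ∃ c ∈ Icc (-1:ℝ) 1, G c = 1 - t :=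
    intermediate_value_Icc (by norm_num) hcont.continuousOn
      (by rw [hG0, hG1]; exact Icc.mem_iff_one_sub_mem.1 ht)
  have hsub : {ω | 1 - t < G (S ω)} ⊆ {ω | c < S ω} := fun ω (h : 1 - t < G (S ω)) ↦
    lt_of_not_ge fun h' ↦ ((hG h').trans_eq hGc).not_gt h
  have hμ : μ.real {ω | c < S ω} = t := by
    have : {ω | c < S ω} = {ω | S ω ≤ c}ᶜ := by ext; simp
    rw [this, probReal_compl_eq_one_sub (measurableSet_le hS measurable_const)]
    change 1 - G c = t
    rw [hGc, sub_sub_cancel]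
  have h1S : Integrable (fun ω ↦ 1 - S ω) μ := (integrable_const 1).sub
    (integrable_of_forall_mem_Icc hS hS01)
  calc ∫ ω in {ω | 1 - t < G (S ω)}, (1 - S ω) ∂μ ≤ ∫ ω in {ω | c < S ω}, (1 - S ω) ∂μ :=
        setIntegral_mono_set h1S.integrableOn
          (ae_of_all _ fun ω ↦ sub_nonneg.2 (hS01 ω).2) (LE.le.eventuallyLE hsub)
    _ ≤ ∫ ω, (1 - S ω) * Y ω ∂μ :=
        setIntegral_le_integral_mul_of_measureReal_le (measurableSet_lt measurable_const hS) h1S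
          hY hY01 (sub_nonneg.2 hc.2) (fun ω (h : c < S ω) ↦ by linarith)
          (fun ω (h : ¬c < S ω) ↦ by linarith [not_lt.1 h]) (hμ.trans hYt.symm).le

lemma intervalIntegral_sq_measureReal_le_le_two_mul_integral_fprSPU (hS : Measurable S)
    (hS01 : ∀ ω, S ω ∈ Icc (0:ℝ) 1) (hp1 : ∫ ω, S ω ∂μ < 1)
    (hcont : Continuous fun u ↦ μ.real {ω | S ω ≤ u}) {Y : ℝ → Ω → ℝ}
    (hY : ∀ t, Measurable (Y t)) (hY01 : ∀ t ω, Y t ω ∈ Icc (0:ℝ) 1)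
    (hYt : ∀ t ∈ Icc (0:ℝ) 1, ∫ ω, Y t ω ∂μ = t)
    (hF : IntervalIntegrable (fun t ↦ fprSPU μ S (Y t)) volume 0 1) :
    ∫ u in (0:ℝ)..1, μ.real {ω | S ω ≤ u} ^ 2
      ≤ 2 * (1 - ∫ ω, S ω ∂μ) * ∫ t in (0:ℝ)..1, fprSPU μ S (Y t) := by
  have hGS : Measurable fun ω ↦ μ.real {ω' | S ω' ≤ S ω} :=
    (measurable_measure_setOf_le_comp hS).ennreal_toReal
  have h1S : ∀ ω, |1 - S ω| ≤ 1 := fun ω ↦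
    abs_le.2 ⟨by linarith [(hS01 ω).2], by linarith [(hS01 ω).1]⟩
  calc ∫ u in (0:ℝ)..1, μ.real {ω | S ω ≤ u} ^ 2
      ≤ 2 * ∫ ω, μ.real {ω' | S ω' ≤ S ω} * (1 - S ω) ∂μ :=
        intervalIntegral_sq_measureReal_le_le hS hS01
    _ = 2 * ∫ t in (0:ℝ)..1, ∫ ω in {ω | 1 - t < μ.real {ω' | S ω' ≤ S ω}}, (1 - S ω) ∂μ := by
        rw [intervalIntegral_setIntegral_one_sub_lt_eq hGS
          (fun _ ↦ ⟨measureReal_nonneg, measureReal_le_one⟩) (w := fun ω ↦ 1 - S ω)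
          (measurable_const.sub hS) h1S]
        simp_rw [mul_comm]
    _ ≤ 2 * ∫ t in (0:ℝ)..1, (1 - ∫ ω, S ω ∂μ) * fprSPU μ S (Y t) := by
        gcongr
        refine intervalIntegral_mono_of_nonneg zero_le_one
          (fun t _ ↦ setIntegral_nonneg (measurableSet_lt measurable_const hGS)
            fun ω _ ↦ sub_nonneg.2 (hS01 ω).2)
          (fun t ht ↦ ?_) (hF.const_mul _)
        rw [mul_fprSPU (integrable_of_forall_mem_Icc hS hS01) hp1]
        exact setIntegral_one_sub_le_integral_one_sub_mul hS hS01 hcont (hY t) (hY01 t)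
          (Ioc_subset_Icc_self ht) (hYt t (Ioc_subset_Icc_self ht))
    _ = 2 * (1 - ∫ ω, S ω ∂μ) * ∫ t in (0:ℝ)..1, fprSPU μ S (Y t) := by
        rw [intervalIntegral.integral_const_mul, mul_assoc]

end ProbabilityMeasure

theorem auc_spu_upper_bound
    {Ω : Type*} [MeasurableSpace Ω] (μ : Measure Ω) [IsProbabilityMeasure μ]
    (S : Ω → ℝ) (hS : Measurable S) (hS01 : ∀ ω, S ω ∈ Set.Icc (0:ℝ) 1)
    (hES0 : 0 < ∫ ω, S ω ∂μ) (hES1 : (∫ ω, S ω ∂μ) < 1)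
    (hcont : Continuous fun u : ℝ => (μ {ω | S ω ≤ u}).toReal)
    (Yh : ℝ → Ω → ℝ) (hYhm : ∀ t, Measurable (Yh t))
    (hYhb : ∀ t ω, Yh t ω = 0 ∨ Yh t ω = 1)
    (hsweep : ∀ t ∈ Set.Icc (0:ℝ) 1, μ {ω | Yh t ω = 1} = ENNReal.ofReal t)
    (TPRS FPRS : ℝ → ℝ)
    (hTPRS : ∀ t, TPRS t = (∫ ω, S ω * Yh t ω ∂μ) / (∫ ω, S ω ∂μ))
    (hFPRS : ∀ t, FPRS t = (∫ ω, (1 - S ω) * Yh t ω ∂μ) / (∫ ω, (1 - S ω) ∂μ))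
    (hFdiff : Differentiable ℝ FPRS) (hFmono : MonotoneOn FPRS (Set.Icc (0:ℝ) 1)) :
    ∫ t in (0:ℝ)..1, TPRS t * deriv FPRS t
      ≤ 1 / 2 +
        (∫ u in (0:ℝ)..1,
            (μ {ω | S ω ≤ u}).toReal * (1 - (μ {ω | S ω ≤ u}).toReal)) /
          (2 * (∫ u in (0:ℝ)..1, (μ {ω | S ω ≤ u}).toReal) *
            (∫ u in (0:ℝ)..1, (1 - (μ {ω | S ω ≤ u}).toReal))) := by
  obtain rfl : TPRS = fun t ↦ tprSPU μ S (Yh t) := funext hTPRS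
  obtain rfl : FPRS = fun t ↦ fprSPU μ S (Yh t) := funext hFPRS
  simp only [← measureReal_def] at hcont ⊢
  have hY01 : ∀ t ω, Yh t ω ∈ Icc (0:ℝ) 1 := fun t ω ↦ by
    rcases hYhb t ω with h | h <;> simp [h]
  have hYt : ∀ t ∈ Icc (0:ℝ) 1, ∫ ω, Yh t ω ∂μ = t := fun t ht ↦ by
    rw [integral_of_ae_eq_zero_or_one (hYhm t).aemeasurable (ae_of_all _ (hYhb t)),
      measureReal_def, hsweep t ht, ENNReal.toReal_ofReal ht.1]
  have hAUC := mul_integral_mul_deriv_eq hES0.ne'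
    (fun t ht ↦ (mul_tprSPU_add_mul_fprSPU hS hS01 (hYhm t) (hY01 t) hES0 hES1).trans (hYt t ht))
    (fprSPU_eq_zero hS01 (hYhm 0) (hY01 0) (hYt 0 (by simp)))
    (fprSPU_eq_one hS hS01 (hYhm 1) (hY01 1) hES1 (hYt 1 (by simp))) hFdiff hFmono
  have hkey := intervalIntegral_sq_measureReal_le_le_two_mul_integral_fprSPU hS hS01 hES1 hcont
    hYhm hY01 hYt (hFdiff.continuous.intervalIntegrable 0 1)
  rw [intervalIntegral_measureReal_le_mul_one_sub_eq hS hS01,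
    intervalIntegral_measureReal_le_eq hS hS01, intervalIntegral_one_sub_measureReal_le_eq hS hS01]
  exact le_one_half_add_div_of_mul_eq hES0 hES1 hAUC hkey
end

section
/- Let S ∈ [0,1] have continuous cdf F_S with 0 < E[S] < 1. The bound B = 1/2 + (∫₀¹ F_S(u)(1−F_S(u))du)/(2∫₀¹F_S(u)du·∫₀¹(1−F_S(u))du) satisfies B ≤ 1, with equality B = 1 if and only if P(S ∈ (0,1)) = 0 (i.e., S ∈ {0,1} almost surely). -/
/-!
Write `F` for the cdf of `S` and `A = ∫₀¹ F`. Since `F (1 - F) = F - F²`, the bound is `B < 1`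
exactly when `A² < ∫₀¹ F²`, i.e. when `∫₀¹ (F - A)² > 0`; this holds because the continuous
`F` is not constant on `[0, 1]`: `F 1 = 1` while `F 0 < 1` as `E[S] > 0`. For the same reason
`S` cannot live on `{0, 1}`: then `F` would be constant on `[0, 1)`, hence by continuity on
`[0, 1]`. So both sides of the equivalence are false.
-/

open MeasureTheory Set

section IntervalIntegral

variable {a b : ℝ} {f : ℝ → ℝ}

theorem intervalIntegral_pos_of_continuous_of_ne_zero (hab : a < b) (hf : Continuous f)
    (hf_nonneg : ∀ u, 0 ≤ f u) {x : ℝ} (hx : x ∈ Icc a b) (hfx : f x ≠ 0) :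
    0 < ∫ u in a..b, f u := by
  rw [intervalIntegral.integral_pos_iff_support_of_nonneg_ae (ae_of_all _ hf_nonneg)
    (hf.intervalIntegrable a b)]
  refine ⟨hab, ?_⟩
  rw [← closure_Ioo hab.ne] at hx
  obtain ⟨y, hy⟩ := mem_closure_iff.1 hx _ hf.isOpen_support hfx
  exact ((hf.isOpen_support.inter isOpen_Ioo).measure_pos volume ⟨y, hy⟩).trans_le
    (measure_mono (inter_subset_inter_right _ Ioo_subset_Ioc_self))

theorem sq_intervalIntegral_lt_intervalIntegral_sq (hf : Continuous f) {x y : ℝ}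
    (hx : x ∈ Icc (0 : ℝ) 1) (hy : y ∈ Icc (0 : ℝ) 1) (hxy : f x ≠ f y) :
    (∫ u in (0 : ℝ)..1, f u) ^ 2 < ∫ u in (0 : ℝ)..1, f u ^ 2 := by
  set A := ∫ u in (0 : ℝ)..1, f u
  have hfi := hf.intervalIntegrable (μ := volume) 0 1
  have hf2i : IntervalIntegrable (fun u ↦ f u ^ 2) volume 0 1 :=
    (hf.pow 2).intervalIntegrable 0 1
  have h_var : ∫ u in (0 : ℝ)..1, (f u - A) ^ 2 = (∫ u in (0 : ℝ)..1, f u ^ 2) - A ^ 2 := by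
    simp only [sub_sq]
    rw [intervalIntegral.integral_add (hf2i.sub (hfi.const_mul 2 |>.mul_const A))
        (intervalIntegrable_const (μ := volume)), intervalIntegral.integral_sub hf2i
        (hfi.const_mul 2 |>.mul_const A), intervalIntegral.integral_mul_const,
      intervalIntegral.integral_const_mul]
    simp only [intervalIntegral.integral_const, sub_zero, one_smul]
    ring
  have h_dev : ∃ z ∈ Icc (0 : ℝ) 1, (f z - A) ^ 2 ≠ 0 := by
    by_cases hxA : f x = A
    · exact ⟨y, hy, pow_ne_zero 2 (sub_ne_zero.2 (hxA ▸ hxy).symm)⟩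
    · exact ⟨x, hx, pow_ne_zero 2 (sub_ne_zero.2 hxA)⟩
  obtain ⟨z, hz, hfz⟩ := h_dev
  have h_pos := intervalIntegral_pos_of_continuous_of_ne_zero (f := fun u ↦ (f u - A) ^ 2)
    zero_lt_one (by fun_prop) (fun u ↦ sq_nonneg _) hz hfz
  linarith

theorem intervalIntegral_mul_one_sub_lt (hf : Continuous f) {x y : ℝ}
    (hx : x ∈ Icc (0 : ℝ) 1) (hy : y ∈ Icc (0 : ℝ) 1) (hxy : f x ≠ f y) :
    ∫ u in (0 : ℝ)..1, f u * (1 - f u) <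
      (∫ u in (0 : ℝ)..1, f u) * ∫ u in (0 : ℝ)..1, (1 - f u) := by
  have hfi := hf.intervalIntegrable (μ := volume) 0 1
  have hf2i : IntervalIntegrable (fun u ↦ f u ^ 2) volume 0 1 :=
    (hf.pow 2).intervalIntegrable 0 1
  simp only [mul_one_sub, ← sq]
  rw [intervalIntegral.integral_sub hfi hf2i, intervalIntegral.integral_sub
    (intervalIntegrable_const (μ := volume)) hfi, intervalIntegral.integral_const]
  have h_sq := sq_intervalIntegral_lt_intervalIntegral_sq hf hx hy hxy
  simp only [sub_zero, one_smul]
  nlinarith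

end IntervalIntegral

section Cdf

variable {Ω : Type*} [MeasurableSpace Ω] {μ : Measure Ω} {S : Ω → ℝ}

theorem measure_le_zero_lt_one_of_integral_pos [IsProbabilityMeasure μ] (hS : 0 ≤ S)
    (h : 0 < ∫ ω, S ω ∂μ) : μ {ω | S ω ≤ 0} < 1 := by
  have hSi := Integrable.of_integral_ne_zero h.ne'
  rw [integral_pos_iff_support_of_nonneg hS hSi] at h
  have h_support : Function.support S = {ω | S ω ≤ 0}ᶜ := by
    ext ω
    simpa using ((hS ω).lt_iff_ne.trans ne_comm).symm
  rw [h_support] at h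
  rw [← measure_univ (μ := μ), ← measure_add_measure_compl₀
    (nullMeasurableSet_le hSi.aemeasurable aemeasurable_const)]
  exact ENNReal.lt_add_right (measure_ne_top μ _) h.ne'

theorem measure_le_eq_of_measure_Ioo_eq_zero {a b u : ℝ} (h : μ {ω | S ω ∈ Ioo a b} = 0)
    (hu : u ∈ Ico a b) : μ {ω | S ω ≤ u} = μ {ω | S ω ≤ a} := by
  refine le_antisymm ?_ (measure_mono fun ω (hω : S ω ≤ a) ↦ hω.trans hu.1)
  calc μ {ω | S ω ≤ u} ≤ μ ({ω | S ω ≤ a} ∪ {ω | S ω ∈ Ioo a b}) :=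
        measure_mono fun ω (hω : S ω ≤ u) ↦ (le_or_gt (S ω) a).imp id
          fun ha ↦ ⟨ha, hω.trans_lt hu.2⟩
    _ ≤ μ {ω | S ω ≤ a} + μ {ω | S ω ∈ Ioo a b} := measure_union_le _ _
    _ = μ {ω | S ω ≤ a} := by rw [h, add_zero]

end Cdf

theorem auc_spu_bound_le_one_iff_hard_labels_general
    {Ω : Type*} [MeasurableSpace Ω] (μ : Measure Ω) [IsProbabilityMeasure μ]
    (S : Ω → ℝ) (hS01 : ∀ ω, S ω ∈ Set.Icc (0:ℝ) 1)
    (hES0 : 0 < ∫ ω, S ω ∂μ)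
    (hcont : Continuous fun u : ℝ => (μ {ω | S ω ≤ u}).toReal)
    (B : ℝ)
    (hB : B = 1 / 2 +
        (∫ u in (0:ℝ)..1,
            (μ {ω | S ω ≤ u}).toReal * (1 - (μ {ω | S ω ≤ u}).toReal)) /
          (2 * (∫ u in (0:ℝ)..1, (μ {ω | S ω ≤ u}).toReal) *
            (∫ u in (0:ℝ)..1, (1 - (μ {ω | S ω ≤ u}).toReal)))) :
    B ≤ 1 ∧ (B = 1 ↔ μ {ω | S ω ∈ Set.Ioo (0:ℝ) 1} = 0) := by
  set F : ℝ → ℝ := fun u ↦ (μ {ω | S ω ≤ u}).toReal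
  have hF1 : F 1 = 1 := by
    simp [F, show {ω | S ω ≤ 1} = univ from eq_univ_of_forall fun ω ↦ (hS01 ω).2]
  have hF0 : F 0 < 1 := by
    simpa using ENNReal.toReal_strict_mono ENNReal.one_ne_top
      (measure_le_zero_lt_one_of_integral_pos (fun ω ↦ (hS01 ω).1) hES0)
  have hF_nonconst : F 0 ≠ F 1 := by rw [hF1]; exact hF0.ne
  have hI_nonneg : 0 ≤ ∫ u in (0 : ℝ)..1, F u * (1 - F u) :=
    intervalIntegral.integral_nonneg zero_le_one fun u _ ↦
      mul_nonneg ENNReal.toReal_nonneg (sub_nonneg.2 measureReal_le_one)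
  have hI_lt := intervalIntegral_mul_one_sub_lt hcont (left_mem_Icc.2 zero_le_one)
    (right_mem_Icc.2 zero_le_one) hF_nonconst
  have hB_lt : B < 1 := by
    have hden : 0 < 2 * (∫ u in (0 : ℝ)..1, F u) * ∫ u in (0 : ℝ)..1, (1 - F u) := by
      linarith
    have h_half : B - 1 / 2 < 1 / 2 := by
      rw [hB, add_sub_cancel_left, div_lt_iff₀ hden]
      linarith
    linarith
  have hS_mid : μ {ω | S ω ∈ Ioo (0 : ℝ) 1} ≠ 0 := fun h ↦ by
    have hF_eqOn : EqOn F (fun _ ↦ F 0) (Ico 0 1) := fun u hu ↦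
      congrArg ENNReal.toReal (measure_le_eq_of_measure_Ioo_eq_zero h hu)
    have hF_eqOn_Icc := hF_eqOn.closure hcont continuous_const
    rw [closure_Ico zero_ne_one] at hF_eqOn_Icc
    exact hF_nonconst (hF_eqOn_Icc (right_mem_Icc.2 zero_le_one)).symm
  exact ⟨hB_lt.le, iff_of_false hB_lt.ne hS_mid⟩

theorem auc_spu_bound_le_one_iff_hard_labels
    {Ω : Type*} [MeasurableSpace Ω] (μ : Measure Ω) [IsProbabilityMeasure μ]
    (S : Ω → ℝ) (hS : Measurable S) (hS01 : ∀ ω, S ω ∈ Set.Icc (0:ℝ) 1)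
    (hES0 : 0 < ∫ ω, S ω ∂μ) (hES1 : (∫ ω, S ω ∂μ) < 1)
    (hcont : Continuous fun u : ℝ => (μ {ω | S ω ≤ u}).toReal)
    (B : ℝ)
    (hB : B = 1 / 2 +
        (∫ u in (0:ℝ)..1,
            (μ {ω | S ω ≤ u}).toReal * (1 - (μ {ω | S ω ≤ u}).toReal)) /
          (2 * (∫ u in (0:ℝ)..1, (μ {ω | S ω ≤ u}).toReal) *
            (∫ u in (0:ℝ)..1, (1 - (μ {ω | S ω ≤ u}).toReal)))) :
    B ≤ 1 ∧ (B = 1 ↔ μ {ω | S ω ∈ Set.Ioo (0:ℝ) 1} = 0) :=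
  auc_spu_bound_le_one_iff_hard_labels_general μ S hS01 hES0 hcont B hB
end
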